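/- arXiv:2312.13083 — 6 statements merged into one kernel-verified Lean document; each statement's English description precedes it below -/
import Mathlib

section
/- For every tree T of order n > 3, ⌊(n−1)²/2⌋ ≤ Mo(T) ≤ (n−1)(n−2), with equality on the left if and only if T ≅ P_n and equality on the right if and only if T ≅ S_n. -/
open SimpleGraph Finset

open scoped Classical in
/-- The number of vertices strictly closer to `u` than to `v`. -/
noncomputable def nCloser {V : Type*} [Fintype V] (G : SimpleGraph V) (u v : V) : ℕ :=
  (Finset.univ.filter (fun w => G.dist w u < G.dist w v)).card

/-- The contribution `|n_u - n_v|` of a pair of vertices. -/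
noncomputable def contrib {V : Type*} [Fintype V] (G : SimpleGraph V) (u v : V) : ℕ :=
  ((nCloser G u v : ℤ) - (nCloser G v u : ℤ)).natAbs

open scoped Classical in
/-- The Mostar index `Mo(G) = Σ_{uv ∈ E(G)} |n_u − n_v|`. -/
noncomputable def mostar {V : Type*} [Fintype V] (G : SimpleGraph V) : ℕ :=
  ∑ e ∈ G.edgeFinset, Sym2.lift
    ⟨fun u v => contrib G u v,
     fun a b => by simp only [contrib]; omega⟩ e

/-- The star `S_{n+1}` with center `0` and `n` leaves. -/
def starGraph (n : ℕ) : SimpleGraph (Fin (n + 1)) where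
  Adj u v := u ≠ v ∧ (u = 0 ∨ v = 0)
  symm := ⟨fun _ _ ⟨h1, h2⟩ => ⟨h1.symm, h2.symm⟩⟩
  loopless := ⟨fun _ ⟨h1, _⟩ => h1 rfl⟩

/-!
Root the tree at a vertex `r`. Every edge joins some `v ≠ r` to its parent, and the vertices
closer to `v` than to the parent form the branch `B v` of vertices whose geodesic to `r` passes
through `v`. Writing `m v = min |B v| (n - |B v|)` for the size of the smaller side, the edge
contributes `n - 2 m v`, so `Mo(T) = n (n - 1) - 2 ∑ m v`.

Upper bound: `m v ≥ 1`, with equality exactly when the edge has a leaf as an endpoint, and a tree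
in which every edge has a leaf endpoint is a star.

Lower bound: for `2 j < n` at most `n - 1 - 2 j` vertices have `m v > j`. Either two disjoint
branches have more than `j` vertices, and then each contains `j` vertices with branch size `≤ j`;
or the branches with more than `j` vertices pairwise intersect, hence form a chain, and their sizes
are distinct numbers in `(j, n - j)`. Summing over `j` bounds `∑ m v` by its value on the path.
Equality forces exactly two edges with `m v = 1`, hence at most two leaves and maximum degree two;
rooted at a leaf, such a tree is a path, the distance to the root being the isomorphism.
-/

open scoped Classical

theorem Finset.sum_eq_sum_range_card_filter_lt {ι : Type*} (s : Finset ι) (f : ι → ℕ)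
    {N : ℕ} (hf : ∀ x ∈ s, f x ≤ N) : ∑ x ∈ s, f x = ∑ j ∈ range N, #{x ∈ s | j < f x} := by
  simp only [card_filter]
  rw [sum_comm]
  refine sum_congr rfl fun x hx => ?_
  have : {j ∈ range N | j < f x} = range (f x) := by
    ext j
    have := hf x hx
    simp only [mem_filter, mem_range]
    omega
  rw [← card_filter, this, card_range]

theorem Nat.sum_range_sub_one_sub_two_mul {n k : ℕ} (hk : 2 * k ≤ n) :
    ∑ j ∈ range k, (n - 1 - 2 * j) = k * (n - k) := by
  induction k with
  | zero => simp
  | succ k ih =>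
    rw [sum_range_succ, ih (by omega)]
    obtain ⟨m, rfl⟩ : ∃ m, n = 2 * k + 2 + m := ⟨n - (2 * k + 2), by omega⟩
    rw [show 2 * k + 2 + m - k = k + 2 + m by omega,
      show 2 * k + 2 + m - (k + 1) = k + 1 + m by omega,
      show 2 * k + 2 + m - 1 - 2 * k = m + 1 by omega]
    ring

theorem Nat.sq_sub_one_div_two_add_two_mul_sum (n : ℕ) :
    (n - 1) ^ 2 / 2 + 2 * ∑ j ∈ range (n / 2), (n - 1 - 2 * j) = (n - 1) * n := by
  rw [sum_range_sub_one_sub_two_mul (Nat.mul_div_le n 2)]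
  rcases Nat.even_or_odd' n with ⟨m, rfl | rfl⟩
  · rcases m with _ | m
    · simp
    · rw [show 2 * (m + 1) - 1 = 2 * m + 1 by omega, show 2 * (m + 1) / 2 = m + 1 by omega,
        show 2 * (m + 1) - (m + 1) = m + 1 by omega]
      ring_nf
      omega
  · rw [show 2 * m + 1 - 1 = 2 * m by omega, show (2 * m + 1) / 2 = m by omega,
      show 2 * m + 1 - m = m + 1 by omega]
    ring_nf
    omega

namespace SimpleGraph

variable {V : Type*} {G : SimpleGraph V}

theorem Connected.exists_adj_dist_add_one (hG : G.Connected) {r v : V} (hv : v ≠ r) :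
    ∃ x, G.Adj v x ∧ G.dist r x + 1 = G.dist r v := by
  obtain ⟨p, hp⟩ := hG.exists_walk_length_eq_dist v r
  cases p with
  | nil => exact absurd rfl hv
  | @cons _ x _ h q =>
    have h1 := dist_le q
    have h2 : G.dist r v ≤ G.dist r x + G.dist x v := hG.dist_triangle
    rw [dist_eq_one_iff_adj.mpr h.symm] at h2
    rw [Walk.length_cons] at hp
    exact ⟨x, h, by rw [dist_comm (v := v), dist_comm (v := x)] at *; omega⟩

theorem Connected.exists_dist_eq_add (hG : G.Connected) {u w : V} {k : ℕ}
    (hk : k ≤ G.dist u w) : ∃ y, G.dist u y = k ∧ G.dist u w = k + G.dist y w := by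
  obtain ⟨p, hp⟩ := hG.exists_walk_length_eq_dist u w
  have h1 : G.dist u (p.getVert k) ≤ k := by simpa [hp, hk] using dist_le (p.take k)
  have h2 : G.dist (p.getVert k) w ≤ G.dist u w - k := by simpa [hp] using dist_le (p.drop k)
  have h3 : G.dist u w ≤ G.dist u (p.getVert k) + G.dist (p.getVert k) w := hG.dist_triangle
  exact ⟨p.getVert k, by omega, by omega⟩

theorem Connected.dist_lt_card [Fintype V] (hG : G.Connected) (u v : V) :
    G.dist u v < Fintype.card V := by
  obtain ⟨p, hp, hl⟩ := hG.exists_path_of_dist u v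
  exact hl ▸ hp.length_lt

theorem IsTree.eq_of_dist_add_eq (hT : G.IsTree) {u w y y' : V}
    (hy : G.dist u w = G.dist u y + G.dist y w) (hy' : G.dist u w = G.dist u y' + G.dist y' w)
    (h : G.dist u y = G.dist u y') : y = y' := by
  obtain ⟨p, hp⟩ := hT.connected.exists_walk_length_eq_dist u y
  obtain ⟨q, hq⟩ := hT.connected.exists_walk_length_eq_dist y w
  obtain ⟨p', hp'⟩ := hT.connected.exists_walk_length_eq_dist u y'
  obtain ⟨q', hq'⟩ := hT.connected.exists_walk_length_eq_dist y' w
  have hpq : (p.append q).IsPath := Walk.isPath_of_length_eq_dist _ (by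
    rw [Walk.length_append]; omega)
  have hpq' : (p'.append q').IsPath := Walk.isPath_of_length_eq_dist _ (by
    rw [Walk.length_append]; omega)
  -- both are the unique path from `u` to `w`, passing `y` resp. `y'` at the same index
  have hget := congrArg (Walk.getVert · (G.dist u y))
    ((hT.existsUnique_path u w).unique hpq hpq')
  simp only [Walk.getVert_append] at hget
  simpa [hp, hp', h] using hget

theorem IsTree.eq_of_adj_of_dist_add_one (hT : G.IsTree) {r v x y : V} (hx : G.Adj v x)
    (hy : G.Adj v y) (hxd : G.dist r x + 1 = G.dist r v) (hyd : G.dist r y + 1 = G.dist r v) :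
    x = y := by
  refine hT.eq_of_dist_add_eq (u := r) (w := v) ?_ ?_ (by omega)
  · rw [dist_eq_one_iff_adj.mpr hx.symm]; omega
  · rw [dist_eq_one_iff_adj.mpr hy.symm]; omega

theorem eq_of_degree_eq_one {v x y : V} [Fintype (G.neighborSet v)] (hv : G.degree v = 1)
    (hx : G.Adj v x) (hy : G.Adj v y) : x = y := by
  obtain ⟨z, -, hz⟩ := degree_eq_one_iff_existsUnique_adj.mp hv
  exact (hz x hx).trans (hz y hy).symm

noncomputable def parent (G : SimpleGraph V) (r v : V) : V :=
  @Classical.epsilon _ ⟨v⟩ fun x => G.Adj v x ∧ G.dist r x + 1 = G.dist r v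

theorem Connected.parent_spec (hG : G.Connected) {r v : V} (hv : v ≠ r) :
    G.Adj v (G.parent r v) ∧ G.dist r (G.parent r v) + 1 = G.dist r v :=
  Classical.epsilon_spec (hG.exists_adj_dist_add_one hv)

theorem IsTree.parent_eq (hT : G.IsTree) {r v x : V} (h : G.Adj v x)
    (hd : G.dist r x + 1 = G.dist r v) : G.parent r v = x := by
  have hv : v ≠ r := by rintro rfl; simp at hd
  have := hT.connected.parent_spec hv
  exact hT.eq_of_adj_of_dist_add_one this.1 h this.2 hd

variable [Fintype V]

theorem one_le_nCloser {u w : V} (h : G.Adj u w) : 1 ≤ nCloser G u w :=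
  card_pos.mpr ⟨u, by simp [dist_eq_one_iff_adj.mpr h]⟩

theorem IsTree.nCloser_add_nCloser (hT : G.IsTree) {u w : V} (h : G.Adj u w) :
    nCloser G u w + nCloser G w u = Fintype.card V := by
  have hsplit : ∀ z, G.dist z w < G.dist z u ↔ ¬ G.dist z u < G.dist z w := fun z => by
    have := hT.dist_eq_dist_add_one_of_adj z h
    omega
  unfold nCloser
  simp only [hsplit]
  convert card_filter_add_card_filter_not (s := univ) (fun z => G.dist z u < G.dist z w)
  exact card_univ.symm

theorem IsTree.nCloser_eq_one_iff (hT : G.IsTree) {u w : V} (h : G.Adj u w) :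
    nCloser G u w = 1 ↔ G.degree u = 1 := by
  have huw : G.dist u w = 1 := dist_eq_one_iff_adj.mpr h
  unfold nCloser
  rw [degree_eq_one_iff_existsUnique_adj]
  refine ⟨fun h1 => ⟨w, h, fun x hx => by_contra fun hxw => hx.ne ?_⟩,
    fun ⟨x, hx, hx'⟩ => ?_⟩
  · have hxw' : G.dist x w ≠ 0 := by rwa [Ne, hT.connected.dist_eq_zero_iff]
    have hxu : G.dist x u = 1 := dist_eq_one_iff_adj.mpr hx.symm
    have := hT.dist_eq_dist_add_one_of_adj x h
    exact card_le_one.mp h1.le u (by simp [huw]) x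
      (by simp only [mem_filter, mem_univ, true_and]; omega)
  · refine card_eq_one.mpr ⟨u, eq_singleton_iff_unique_mem.mpr
      ⟨by simp [huw], fun z hz => by_contra fun hzu => ?_⟩⟩
    obtain ⟨y, hy, hyd⟩ := hT.connected.exists_adj_dist_add_one (Ne.symm hzu)
    rw [hx' y hy, ← hx' w h] at hyd
    simp only [mem_filter] at hz
    omega

theorem IsTree.contrib_add_two_mul_min (hT : G.IsTree) {u w : V} (h : G.Adj u w) :
    contrib G u w + 2 * min (nCloser G u w) (nCloser G w u) = Fintype.card V := by
  have := hT.nCloser_add_nCloser h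
  unfold contrib
  omega

theorem IsTree.contrib_le (hT : G.IsTree) {u w : V} (h : G.Adj u w) :
    contrib G u w ≤ Fintype.card V - 2 := by
  have := hT.contrib_add_two_mul_min h
  have := one_le_nCloser h
  have := one_le_nCloser h.symm
  omega

theorem IsTree.contrib_eq_iff (hT : G.IsTree) {u w : V} (h : G.Adj u w) :
    contrib G u w = Fintype.card V - 2 ↔ G.degree u = 1 ∨ G.degree w = 1 := by
  rw [← hT.nCloser_eq_one_iff h, ← hT.nCloser_eq_one_iff h.symm]
  have := hT.contrib_add_two_mul_min h
  have := one_le_nCloser h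
  have := one_le_nCloser h.symm
  omega

theorem IsTree.mostar_le (hT : G.IsTree) :
    mostar G ≤ (Fintype.card V - 1) * (Fintype.card V - 2) := by
  have hE : Fintype.card V - 1 = #G.edgeFinset := by
    have := hT.card_edgeFinset
    omega
  unfold mostar
  rw [hE, ← smul_eq_mul]
  refine sum_le_card_nsmul _ _ _ fun e he => ?_
  induction e using Sym2.ind with
  | _ u w => exact hT.contrib_le (mem_edgeFinset.mp he)

theorem IsTree.mostar_eq_iff (hT : G.IsTree) :
    mostar G = (Fintype.card V - 1) * (Fintype.card V - 2) ↔
      ∀ u w, G.Adj u w → G.degree u = 1 ∨ G.degree w = 1 := by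
  have hE : Fintype.card V - 1 = #G.edgeFinset := by
    have := hT.card_edgeFinset
    omega
  unfold mostar
  rw [hE, ← smul_eq_mul, ← sum_const, sum_eq_sum_iff_of_le]
  · simp only [Sym2.forall, mem_edgeFinset, mem_edgeSet, Sym2.lift_mk]
    exact forall₂_congr fun u w => imp_congr_right fun h => hT.contrib_eq_iff h
  · intro e he
    induction e using Sym2.ind with
    | _ u w => exact hT.contrib_le (mem_edgeFinset.mp he)

theorem IsTree.exists_two_le_degree (hT : G.IsTree) (hn : 3 ≤ Fintype.card V) :
    ∃ c, 2 ≤ G.degree c := by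
  by_contra! h
  have := G.sum_degrees_eq_twice_card_edges
  have := hT.card_edgeFinset
  have : ∑ v, G.degree v ≤ ∑ _v : V, 1 := sum_le_sum fun v _ => Nat.le_of_lt_succ (h v)
  simp only [sum_const, card_univ, smul_eq_mul, mul_one] at this
  omega

theorem IsTree.exists_adj_iff_of_forall_adj_degree_eq_one (hT : G.IsTree)
    (hn : 3 ≤ Fintype.card V) (h : ∀ u w, G.Adj u w → G.degree u = 1 ∨ G.degree w = 1) :
    ∃ c, ∀ u w, G.Adj u w ↔ u ≠ w ∧ (u = c ∨ w = c) := by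
  obtain ⟨c, hc⟩ := hT.exists_two_le_degree hn
  have hadj : ∀ v, v ≠ c → G.Adj c v := fun v hv => by
    by_contra hcv
    -- the vertex `y` after `c` on a geodesic to `v` has two neighbours, so no end of `cy` is a leaf
    have h2 := hT.connected.one_lt_dist_of_ne_of_not_adj hv.symm hcv
    obtain ⟨y, hy1, hyv⟩ := hT.connected.exists_dist_eq_add (u := c) (w := v) (k := 1) h2.le
    obtain ⟨x, hx, hxd⟩ := hT.connected.exists_adj_dist_add_one (r := v) (v := y) (by
      rintro rfl; rw [dist_self] at hyv; omega)
    have hcy : G.Adj c y := dist_eq_one_iff_adj.mp hy1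
    have hxc : x ≠ c := by
      rintro rfl
      rw [dist_comm (u := v), dist_comm (u := v), hyv, dist_comm] at hxd
      omega
    rcases h c y hcy with hc1 | hy1
    · omega
    · exact hxc (eq_of_degree_eq_one hy1 hx hcy.symm)
  refine ⟨c, fun u w => ⟨fun huw => ⟨huw.ne, ?_⟩, ?_⟩⟩
  · by_contra! hne
    rcases h u w huw with hu | hw
    · exact hne.2 (eq_of_degree_eq_one hu huw (hadj u hne.1).symm)
    · exact hne.1 (eq_of_degree_eq_one hw huw.symm (hadj w hne.2).symm)
  · rintro ⟨hne, rfl | rfl⟩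
    · exact hadj w hne.symm
    · exact (hadj u hne).symm

theorem nonempty_iso_starGraph {c : V} (hc : ∀ u w, G.Adj u w ↔ u ≠ w ∧ (u = c ∨ w = c)) :
    Nonempty (G ≃g _root_.starGraph (Fintype.card V - 1)) := by
  have : 0 < Fintype.card V := Fintype.card_pos_iff.mpr ⟨c⟩
  let e₀ : V ≃ Fin (Fintype.card V - 1 + 1) := Fintype.equivFinOfCardEq (by omega)
  let e : V ≃ Fin (Fintype.card V - 1 + 1) := e₀.trans (Equiv.swap (e₀ c) 0)
  have he : ∀ v, e v = 0 ↔ v = c := fun v => by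
    rw [← e.apply_eq_iff_eq (y := c)]
    simp [e]
  refine ⟨⟨e, fun {u w} => ?_⟩⟩
  change e u ≠ e w ∧ (e u = 0 ∨ e w = 0) ↔ _
  rw [hc, he, he, e.injective.ne_iff]

theorem Iso.forall_adj_degree_eq_one {n : ℕ} (f : G ≃g _root_.starGraph n) :
    ∀ u w, G.Adj u w → G.degree u = 1 ∨ G.degree w = 1 := by
  have hleaf : ∀ v, f v ≠ 0 → G.degree v = 1 := fun v hv => by
    rw [← f.degree_eq, degree_eq_one_iff_existsUnique_adj]
    exact ⟨0, ⟨hv, Or.inr rfl⟩, fun y hy => hy.2.resolve_left hv⟩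
  intro u w huw
  obtain ⟨hne, hu | hw⟩ := f.map_adj_iff.mpr huw
  · exact Or.inr (hleaf w (hu ▸ hne.symm))
  · exact Or.inl (hleaf u (hw ▸ hne))

theorem IsTree.forall_adj_degree_eq_one_iff_nonempty_iso_starGraph (hT : G.IsTree)
    (hn : 3 ≤ Fintype.card V) :
    (∀ u w, G.Adj u w → G.degree u = 1 ∨ G.degree w = 1) ↔
      Nonempty (G ≃g _root_.starGraph (Fintype.card V - 1)) := by
  refine ⟨fun h => ?_, fun ⟨f⟩ => f.forall_adj_degree_eq_one⟩
  obtain ⟨c, hc⟩ := hT.exists_adj_iff_of_forall_adj_degree_eq_one hn h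
  exact nonempty_iso_starGraph hc

theorem IsTree.sum_edgeFinset_eq_sum_parent {M : Type*} [AddCommMonoid M] (hT : G.IsTree)
    (r : V) (f : Sym2 V → M) :
    ∑ e ∈ G.edgeFinset, f e = ∑ v ∈ univ.erase r, f s(v, G.parent r v) := by
  have hspec := fun v (hv : v ∈ univ.erase r) => hT.connected.parent_spec (ne_of_mem_erase hv)
  symm
  refine sum_bij (fun v _ => s(v, G.parent r v)) (fun v hv => ?_) (fun v hv w hw hvw => ?_)
    (fun e he => ?_) (fun _ _ => rfl)
  · simpa using (hspec v hv).1
  · rcases Sym2.eq_iff.mp hvw with ⟨h, -⟩ | ⟨h₁, h₂⟩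
    · exact h
    · have := (hspec v hv).2
      have := (hspec w hw).2
      rw [← h₁, h₂] at *
      omega
  · induction e using Sym2.ind with
    | _ u w =>
      have huw : G.Adj u w := mem_edgeFinset.mp he
      rcases hT.dist_eq_dist_add_one_of_adj r huw with h | h
      · exact ⟨u, mem_erase.mpr ⟨by rintro rfl; simp at h, mem_univ _⟩,
          by rw [hT.parent_eq huw h.symm]⟩
      · exact ⟨w, mem_erase.mpr ⟨by rintro rfl; simp at h, mem_univ _⟩,
          by rw [hT.parent_eq huw.symm h.symm, Sym2.eq_swap]⟩

noncomputable def branch (G : SimpleGraph V) (r v : V) : Finset V :=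
  {z | G.dist r z = G.dist r v + G.dist v z}

@[simp]
theorem mem_branch {r v z : V} : z ∈ G.branch r v ↔ G.dist r z = G.dist r v + G.dist v z := by
  simp [branch]

theorem self_mem_branch (r v : V) : v ∈ G.branch r v := by
  simp

theorem Connected.branch_subset (hG : G.Connected) {r v w : V} (hw : w ∈ G.branch r v) :
    G.branch r w ⊆ G.branch r v := fun z hz => by
  have h1 : G.dist v z ≤ G.dist v w + G.dist w z := hG.dist_triangle
  have h2 : G.dist r z ≤ G.dist r v + G.dist v z := hG.dist_triangle
  simp only [mem_branch] at *
  omega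

theorem Connected.eq_of_mem_branch (hG : G.Connected) {r v w : V} (hw : w ∈ G.branch r v)
    (hv : v ∈ G.branch r w) : v = w := by
  simp only [mem_branch] at *
  rw [← hG.dist_eq_zero_iff, dist_comm (u := w)] at *
  omega

theorem Connected.root_notMem_branch (hG : G.Connected) {r v : V} (hv : v ≠ r) :
    r ∉ G.branch r v := by
  rw [mem_branch, dist_self]
  have := hG.pos_dist_of_ne hv.symm
  omega

theorem Connected.card_branch_lt (hG : G.Connected) {r v w : V} (hw : w ∈ G.branch r v)
    (hne : w ≠ v) : #(G.branch r w) < #(G.branch r v) :=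
  card_lt_card <| (ssubset_iff_of_subset (hG.branch_subset hw)).mpr
    ⟨v, self_mem_branch r v, fun hv => hne (hG.eq_of_mem_branch hw hv).symm⟩

theorem IsTree.branch_subset_or_subset (hT : G.IsTree) {r v w z : V} (hv : z ∈ G.branch r v)
    (hw : z ∈ G.branch r w) :
    G.branch r v ⊆ G.branch r w ∨ G.branch r w ⊆ G.branch r v := by
  wlog hvw : G.dist r v ≤ G.dist r w generalizing v w
  · exact (this hw hv (by omega)).symm
  obtain ⟨y, hy, hyw⟩ := hT.connected.exists_dist_eq_add hvw
  have h1 : G.dist r z ≤ G.dist r y + G.dist y z := hT.connected.dist_triangle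
  have h2 : G.dist y z ≤ G.dist y w + G.dist w z := hT.connected.dist_triangle
  simp only [mem_branch] at hv hw
  obtain rfl : y = v := hT.eq_of_dist_add_eq (w := z) (by omega) hv hy
  exact Or.inr (hT.connected.branch_subset (mem_branch.mpr (by omega)))

theorem IsTree.mem_branch_iff_dist_lt (hT : G.IsTree) {r v p : V} (h : G.Adj v p)
    (hd : G.dist r p + 1 = G.dist r v) (z : V) :
    z ∈ G.branch r v ↔ G.dist z v < G.dist z p := by
  have hvp := hT.dist_eq_dist_add_one_of_adj z h
  rw [mem_branch]
  refine ⟨fun hz => ?_, fun hz => ?_⟩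
  · have : G.dist r z ≤ G.dist r p + G.dist p z := hT.connected.dist_triangle
    rw [dist_comm (u := p), dist_comm (u := v)] at *
    omega
  induction hn : G.dist r p generalizing v p with
  | zero =>
    obtain rfl := hT.connected.dist_eq_zero_iff.mp hn
    rw [dist_self] at hd
    rw [dist_comm (u := r), dist_comm (u := v)]
    omega
  | succ k ih =>
    obtain ⟨q, hpq, hq⟩ := hT.connected.exists_adj_dist_add_one (r := r) (v := p)
      (by rintro rfl; simp at hn)
    have hpq' := hT.dist_eq_dist_add_one_of_adj z hpq
    -- otherwise `v` and `q` would both be the neighbour of `p` on the way to `z`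
    have hzq : G.dist z p < G.dist z q := by
      by_contra hzq
      obtain rfl := hT.eq_of_adj_of_dist_add_one (r := z) h.symm hpq (by omega) (by omega)
      omega
    have := ih hpq hq hpq' hzq (by omega)
    rw [dist_comm (u := p), dist_comm (u := v)] at *
    omega

theorem IsTree.nCloser_parent (hT : G.IsTree) {r v : V} (hv : v ≠ r) :
    nCloser G v (G.parent r v) = #(G.branch r v) := by
  obtain ⟨h, hd⟩ := hT.connected.parent_spec hv
  unfold nCloser
  congr 1
  ext z
  simp [← hT.mem_branch_iff_dist_lt h hd z]

/-- The number of vertices on the smaller side of the edge joining `v` to its parent. -/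
noncomputable def minSide (G : SimpleGraph V) (r v : V) : ℕ :=
  min #(G.branch r v) (Fintype.card V - #(G.branch r v))

theorem IsTree.mostar_add_two_mul_sum_minSide (hT : G.IsTree) (r : V) :
    mostar G + 2 * ∑ v ∈ univ.erase r, G.minSide r v =
      (Fintype.card V - 1) * Fintype.card V := by
  unfold mostar
  rw [hT.sum_edgeFinset_eq_sum_parent r, mul_sum, ← sum_add_distrib,
    sum_congr rfl fun v hv => ?_, sum_const, card_erase_of_mem (mem_univ r), card_univ,
    smul_eq_mul]
  have hv := ne_of_mem_erase hv
  have := hT.contrib_add_two_mul_min (hT.connected.parent_spec hv).1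
  have := hT.nCloser_add_nCloser (hT.connected.parent_spec hv).1
  simp only [Sym2.lift_mk, minSide]
  rw [hT.nCloser_parent hv] at *
  omega

theorem sum_minSide_eq_sum_card_filter (r : V) :
    ∑ v ∈ univ.erase r, G.minSide r v =
      ∑ j ∈ range (Fintype.card V / 2), #{v ∈ univ.erase r | j < G.minSide r v} :=
  sum_eq_sum_range_card_filter_lt _ _ fun v _ => by unfold minSide; omega

/-- A vertex `u ∈ B v` of least branch size `> j` has `|B u| - 1 ≥ j` descendants, all of
branch size `≤ j`. -/
theorem Connected.le_card_filter_card_branch_le (hG : G.Connected) {r v : V} {j : ℕ}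
    (hj : j < #(G.branch r v)) : j ≤ #{z ∈ G.branch r v | #(G.branch r z) ≤ j} := by
  obtain ⟨u, hu, hmin⟩ := exists_min_image {z ∈ G.branch r v | j < #(G.branch r z)}
    (fun z => #(G.branch r z)) ⟨v, mem_filter.mpr ⟨self_mem_branch r v, hj⟩⟩
  rw [mem_filter] at hu
  have hsub : (G.branch r u).erase u ⊆ {z ∈ G.branch r v | #(G.branch r z) ≤ j} := by
    intro z hz
    obtain ⟨hzu, hz⟩ := mem_erase.mp hz
    have hlt := hG.card_branch_lt hz hzu
    have hzv := hG.branch_subset hu.1 hz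
    refine mem_filter.mpr ⟨hzv, not_lt.mp fun hjz => ?_⟩
    exact absurd (hmin z (mem_filter.mpr ⟨hzv, hjz⟩)) (not_le.mpr hlt)
  have := card_le_card hsub
  rw [card_erase_of_mem (self_mem_branch r u)] at this
  omega

theorem IsTree.card_filter_lt_minSide_add_le (hT : G.IsTree) (r : V) {j : ℕ}
    (hj : 2 * j < Fintype.card V) :
    #{v ∈ univ.erase r | j < G.minSide r v} + 2 * j + 1 ≤ Fintype.card V := by
  set n := Fintype.card V
  have hcard : #(univ.erase r) = n - 1 := by rw [card_erase_of_mem (mem_univ r), card_univ]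
  by_cases hdisj : ∃ v ∈ univ.erase r, ∃ w ∈ univ.erase r,
      j < #(G.branch r v) ∧ j < #(G.branch r w) ∧ Disjoint (G.branch r v) (G.branch r w)
  · obtain ⟨v, hv, w, hw, hjv, hjw, hvw⟩ := hdisj
    have hsmall : ∀ x ∈ univ.erase r, {z ∈ G.branch r x | #(G.branch r z) ≤ j} ⊆
        {z ∈ univ.erase r | #(G.branch r z) ≤ j} :=
      fun x hx => filter_subset_filter _ fun z hz => mem_erase.mpr
        ⟨by rintro rfl; exact hT.connected.root_notMem_branch (ne_of_mem_erase hx) hz,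
          mem_univ z⟩
    have h2j := card_le_card (union_subset (hsmall v hv) (hsmall w hw))
    rw [card_union_of_disjoint (disjoint_filter_filter hvw)] at h2j
    have := hT.connected.le_card_filter_card_branch_le hjv
    have := hT.connected.le_card_filter_card_branch_le hjw
    have hsub : {v ∈ univ.erase r | j < G.minSide r v} ⊆
        {v ∈ univ.erase r | ¬ #(G.branch r v) ≤ j} :=
      monotone_filter_right _ fun v _ h => not_le.mpr (lt_min_iff.mp h).1
    have := card_le_card hsub
    have := card_filter_add_card_filter_not (s := univ.erase r) (fun v => #(G.branch r v) ≤ j)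
    omega
  · push Not at hdisj
    set T := {v ∈ univ.erase r | j < G.minSide r v} with hTdef
    have hinj : Set.InjOn (fun v => #(G.branch r v)) T := by
      intro v hv w hw hvw
      simp only [hTdef, mem_coe, mem_filter, minSide, lt_min_iff] at hv hw
      obtain ⟨z, hzv, hzw⟩ := not_disjoint_iff.mp (hdisj v hv.1 w hw.1 hv.2.1 hw.2.1)
      have heq : G.branch r v = G.branch r w := by
        rcases hT.branch_subset_or_subset hzv hzw with h | h
        · exact eq_of_subset_of_card_le h hvw.ge
        · exact (eq_of_subset_of_card_le h hvw.le).symm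
      exact hT.connected.eq_of_mem_branch (heq ▸ self_mem_branch r w)
        (heq ▸ self_mem_branch r v)
    have hmaps : Set.MapsTo (fun v => #(G.branch r v)) T (Ioo j (n - j)) := by
      intro v hv
      simp only [hTdef, mem_coe, mem_filter, minSide, lt_min_iff, mem_Ioo] at hv ⊢
      omega
    have := card_le_card_of_injOn _ hmaps hinj
    rw [Nat.card_Ioo] at this
    omega

theorem IsTree.sq_div_two_le_mostar (hT : G.IsTree) :
    (Fintype.card V - 1) ^ 2 / 2 ≤ mostar G := by
  obtain ⟨r⟩ := hT.connected.nonempty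
  have hle : ∑ v ∈ univ.erase r, G.minSide r v ≤
      ∑ j ∈ range (Fintype.card V / 2), (Fintype.card V - 1 - 2 * j) := by
    rw [sum_minSide_eq_sum_card_filter]
    refine sum_le_sum fun j hj => ?_
    have := hT.card_filter_lt_minSide_add_le r (j := j) (by have := mem_range.mp hj; omega)
    omega
  have := hT.mostar_add_two_mul_sum_minSide r
  have := Nat.sq_sub_one_div_two_add_two_mul_sum (Fintype.card V)
  omega

theorem IsTree.card_filter_one_lt_minSide_of_mostar_eq (hT : G.IsTree)
    (hn : 4 ≤ Fintype.card V) (r : V) (h : mostar G = (Fintype.card V - 1) ^ 2 / 2) :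
    #{v ∈ univ.erase r | 1 < G.minSide r v} + 3 = Fintype.card V := by
  have := hT.mostar_add_two_mul_sum_minSide r
  have := Nat.sq_sub_one_div_two_add_two_mul_sum (Fintype.card V)
  have hsum : ∑ v ∈ univ.erase r, G.minSide r v =
      ∑ j ∈ range (Fintype.card V / 2), (Fintype.card V - 1 - 2 * j) := by omega
  rw [sum_minSide_eq_sum_card_filter, sum_eq_sum_iff_of_le fun j hj => ?_] at hsum
  · have := hsum 1 (mem_range.mpr (by omega))
    omega
  · have := hT.card_filter_lt_minSide_add_le r (j := j) (by have := mem_range.mp hj; omega)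
    omega

theorem IsTree.card_leaves_le_two_of_mostar_eq (hT : G.IsTree) (hn : 4 ≤ Fintype.card V)
    (h : mostar G = (Fintype.card V - 1) ^ 2 / 2) : #{v | G.degree v = 1} ≤ 2 := by
  obtain ⟨c, hc⟩ := hT.exists_two_le_degree (by omega)
  have hsub : ({v | G.degree v = 1} : Finset V) ⊆
      {v ∈ univ.erase c | ¬ 1 < G.minSide c v} := by
    intro v hv
    have hv1 : G.degree v = 1 := (mem_filter.mp hv).2
    have hvc : v ≠ c := by rintro rfl; omega
    have := (hT.nCloser_eq_one_iff (hT.connected.parent_spec hvc).1).mpr hv1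
    rw [hT.nCloser_parent hvc] at this
    simp [hvc, minSide, this]
  have := card_le_card hsub
  have := card_filter_add_card_filter_not (s := univ.erase c) (fun v => 1 < G.minSide c v)
  have := hT.card_filter_one_lt_minSide_of_mostar_eq hn c h
  rw [card_erase_of_mem (mem_univ c), card_univ] at *
  omega

theorem IsTree.degree_le_two_of_card_leaves_le_two (hT : G.IsTree) (hn : 2 ≤ Fintype.card V)
    (h : #{v | G.degree v = 1} ≤ 2) (v : V) : G.degree v ≤ 2 := by
  have : Nontrivial V := Fintype.one_lt_card_iff_nontrivial.mp hn
  have hpos := hT.connected.preconnected.degree_pos_of_nontrivial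
  by_contra! hv
  have key : ∑ _w : V, 2 < ∑ w, (G.degree w + if G.degree w = 1 then 1 else 0) :=
    sum_lt_sum (fun w _ => by have := hpos w; split <;> omega)
      ⟨v, mem_univ v, by split <;> omega⟩
  rw [sum_add_distrib, sum_boole, G.sum_degrees_eq_twice_card_edges, sum_const, card_univ,
    smul_eq_mul, Nat.cast_id] at key
  have := hT.card_edgeFinset
  omega

section Path

variable {r : V} (hT : G.IsTree) (hr : G.degree r = 1) (hdeg : ∀ v, G.degree v ≤ 2)
include hT hr hdeg

theorem IsTree.eq_of_adj_of_dist_eq_add_one {u x y : V} (hx : G.Adj u x) (hy : G.Adj u y)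
    (hxd : G.dist r x = G.dist r u + 1) (hyd : G.dist r y = G.dist r u + 1) : x = y := by
  by_cases hu : u = r
  · subst hu
    exact eq_of_degree_eq_one hr hx hy
  obtain ⟨p, hp, hpd⟩ := hT.connected.exists_adj_dist_add_one hu
  by_contra hxy
  have hsub : ({x, y, p} : Finset V) ⊆ G.neighborFinset u := by
    intro z hz
    simp only [mem_insert, mem_singleton] at hz
    rcases hz with rfl | rfl | rfl <;> simpa
  have := card_le_card hsub
  rw [card_neighborFinset_eq_degree, card_eq_three.mpr ⟨x, y, p, hxy,
    by rintro rfl; omega, by rintro rfl; omega, rfl⟩] at this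
  exact absurd (hdeg u) (by omega)

theorem IsTree.dist_injective_of_degree_le_two : Function.Injective (G.dist r) := by
  intro v w hvw
  induction hk : G.dist r v generalizing v w with
  | zero =>
    have hw : G.dist r w = 0 := hvw ▸ hk
    rw [hT.connected.dist_eq_zero_iff] at hk hw
    exact hk.symm.trans hw
  | succ k ih =>
    have hv : v ≠ r := by rintro rfl; simp at hk
    have hw : w ≠ r := by rintro rfl; rw [dist_self] at hvw; omega
    obtain ⟨pv, hpv, hpvd⟩ := hT.connected.exists_adj_dist_add_one hv
    obtain ⟨pw, hpw, hpwd⟩ := hT.connected.exists_adj_dist_add_one hw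
    obtain rfl : pv = pw := ih (by omega) (by omega)
    exact hT.eq_of_adj_of_dist_eq_add_one hr hdeg hpv.symm hpw.symm (by omega) (by omega)

theorem IsTree.adj_iff_of_degree_le_two (u w : V) :
    G.Adj u w ↔ G.dist r u + 1 = G.dist r w ∨ G.dist r w + 1 = G.dist r u := by
  refine ⟨fun h => (hT.dist_eq_dist_add_one_of_adj r h).elim (Or.inr ·.symm) (Or.inl ·.symm),
    fun h => ?_⟩
  wlog huw : G.dist r u + 1 = G.dist r w generalizing u w
  · exact (this w u h.symm (h.resolve_left huw)).symm
  obtain ⟨p, hp, hpd⟩ := hT.connected.exists_adj_dist_add_one (r := r) (v := w)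
    (by rintro rfl; simp at huw)
  obtain rfl : p = u := hT.dist_injective_of_degree_le_two hr hdeg (by omega)
  exact hp.symm

theorem IsTree.nonempty_iso_pathGraph_of_degree_le_two :
    Nonempty (G ≃g pathGraph (Fintype.card V)) := by
  let φ : V → Fin (Fintype.card V) := fun v => ⟨G.dist r v, hT.connected.dist_lt_card r v⟩
  have hφ : φ.Injective := fun v w h =>
    hT.dist_injective_of_degree_le_two hr hdeg (congrArg Fin.val h)
  refine ⟨⟨Equiv.ofBijective φ ((Fintype.bijective_iff_injective_and_card φ).mpr
    ⟨hφ, by simp⟩), fun {u w} => ?_⟩⟩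
  rw [pathGraph_adj, hT.adj_iff_of_degree_le_two hr hdeg]
  rfl

theorem IsTree.card_filter_dist_of_degree_le_two (P : ℕ → Prop) [DecidablePred P] :
    #{z | P (G.dist r z)} = #{i ∈ range (Fintype.card V) | P i} := by
  have hinj := hT.dist_injective_of_degree_le_two hr hdeg
  have himage : univ.image (G.dist r) = range (Fintype.card V) :=
    eq_of_subset_of_card_le (fun i hi => by
      obtain ⟨v, -, rfl⟩ := mem_image.mp hi
      exact mem_range.mpr (hT.connected.dist_lt_card r v))
      (by rw [card_image_of_injective _ hinj, card_range, card_univ])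
  rw [← himage, filter_image, card_image_of_injective _ hinj]

theorem IsTree.card_branch_of_degree_le_two (v : V) :
    #(G.branch r v) = Fintype.card V - G.dist r v := by
  have hbranch : G.branch r v = ({z | G.dist r v ≤ G.dist r z} : Finset V) := by
    ext z
    rw [mem_branch, mem_filter]
    refine ⟨fun h => ⟨mem_univ z, by omega⟩, fun ⟨_, h⟩ => ?_⟩
    obtain ⟨y, hy, hyz⟩ := hT.connected.exists_dist_eq_add h
    obtain rfl := hT.dist_injective_of_degree_le_two hr hdeg hy
    exact hyz
  rw [hbranch, hT.card_filter_dist_of_degree_le_two hr hdeg (G.dist r v ≤ ·), ← Nat.card_Ico]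
  congr 1
  ext i
  simp [and_comm]

theorem IsTree.mostar_eq_of_degree_le_two : mostar G = (Fintype.card V - 1) ^ 2 / 2 := by
  have hlevel : ∀ j, #{v ∈ univ.erase r | j < G.minSide r v} = Fintype.card V - 1 - 2 * j := by
    intro j
    have hset : {v ∈ univ.erase r | j < G.minSide r v} =
        ({v | j < G.dist r v ∧ G.dist r v < Fintype.card V - j} : Finset V) := by
      ext v
      have := hT.connected.dist_lt_card r v
      simp only [mem_filter, mem_erase, mem_univ, minSide,
        hT.card_branch_of_degree_le_two hr hdeg, ← hT.connected.dist_eq_zero_iff.not,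
        dist_comm (u := v), and_true, true_and]
      omega
    rw [hset, hT.card_filter_dist_of_degree_le_two hr hdeg
      (fun i => j < i ∧ i < Fintype.card V - j),
      show {i ∈ range (Fintype.card V) | j < i ∧ i < Fintype.card V - j} =
        Ioo j (Fintype.card V - j) by ext; simp only [mem_filter, mem_range, mem_Ioo]; omega,
      Nat.card_Ioo]
    omega
  have := hT.mostar_add_two_mul_sum_minSide r
  rw [sum_minSide_eq_sum_card_filter, sum_congr rfl fun j _ => hlevel j] at this
  have := Nat.sq_sub_one_div_two_add_two_mul_sum (Fintype.card V)
  omega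

end Path

theorem pathGraph_degree_le_two {n : ℕ} (i : Fin n) : (pathGraph n).degree i ≤ 2 := by
  rw [← card_neighborFinset_eq_degree]
  have hmaps : Set.MapsTo Fin.val ((pathGraph n).neighborFinset i : Set (Fin n))
      (({i.val - 1, i.val + 1} : Finset ℕ) : Set ℕ) := fun j hj => by
    simp only [mem_coe, mem_neighborFinset, pathGraph_adj] at hj
    simp only [coe_insert, coe_singleton, Set.mem_insert_iff, Set.mem_singleton_iff]
    omega
  exact (card_le_card_of_injOn _ hmaps Fin.val_injective.injOn).trans card_le_two

theorem pathGraph_degree_zero {n : ℕ} (hn : 2 ≤ n) :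
    (pathGraph n).degree ⟨0, by omega⟩ = 1 :=
  degree_eq_one_iff_existsUnique_adj.mpr ⟨⟨1, hn⟩, by simp [pathGraph_adj],
    fun j hj => Fin.ext (by have := pathGraph_adj.mp hj; simp only at this ⊢; omega)⟩

theorem IsTree.mostar_eq_of_iso_pathGraph (hT : G.IsTree) (hn : 2 ≤ Fintype.card V)
    (f : G ≃g pathGraph (Fintype.card V)) : mostar G = (Fintype.card V - 1) ^ 2 / 2 := by
  refine hT.mostar_eq_of_degree_le_two (r := f.symm ⟨0, by omega⟩) ?_ fun v => ?_
  · rw [← f.degree_eq, f.apply_symm_apply]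
    exact pathGraph_degree_zero hn
  · rw [← f.degree_eq]
    exact pathGraph_degree_le_two _

theorem IsTree.nonempty_iso_pathGraph_of_mostar_eq (hT : G.IsTree) (hn : 4 ≤ Fintype.card V)
    (h : mostar G = (Fintype.card V - 1) ^ 2 / 2) :
    Nonempty (G ≃g pathGraph (Fintype.card V)) := by
  have : Nontrivial V := Fintype.one_lt_card_iff_nontrivial.mp (by omega)
  obtain ⟨r, hr⟩ := hT.exists_vert_degree_one_of_nontrivial
  exact hT.nonempty_iso_pathGraph_of_degree_le_two hr
    (hT.degree_le_two_of_card_leaves_le_two (by omega) (hT.card_leaves_le_two_of_mostar_eq hn h))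

end SimpleGraph

theorem mostar_tree_extremal {V : Type*} [Fintype V] (G : SimpleGraph V)
    (hT : G.IsTree) (hn : 3 < Fintype.card V) :
    (Fintype.card V - 1) ^ 2 / 2 ≤ mostar G ∧
    mostar G ≤ (Fintype.card V - 1) * (Fintype.card V - 2) ∧
    (mostar G = (Fintype.card V - 1) ^ 2 / 2 ↔
      Nonempty (G ≃g SimpleGraph.pathGraph (Fintype.card V))) ∧
    (mostar G = (Fintype.card V - 1) * (Fintype.card V - 2) ↔
      Nonempty (G ≃g _root_.starGraph (Fintype.card V - 1))) :=
  ⟨hT.sq_div_two_le_mostar, hT.mostar_le,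
    ⟨hT.nonempty_iso_pathGraph_of_mostar_eq hn,
      fun ⟨f⟩ => hT.mostar_eq_of_iso_pathGraph (by omega) f⟩,
    hT.mostar_eq_iff.trans (hT.forall_adj_degree_eq_one_iff_nonempty_iso_starGraph (by omega))⟩
end

section
/- For every m ≥ 2, the graph G obtained from the even cycle C_{2m} by attaching a new pendent vertex v to one vertex u satisfies Mo(G) = 4m − 1. -/
open SimpleGraph Finset

/-- The graph obtained from the cycle `C_n` (on the vertices `0, …, n-1`) by
attaching the pendent vertex `n` to the vertex `0`. -/
def cyclePlusPendant (n : ℕ) : SimpleGraph (Fin (n + 1)) :=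
  SimpleGraph.fromRel (fun u v =>
    (u.val < n ∧ v.val < n ∧ (u.val + 1) % n = v.val) ∨ (u.val = n ∧ v.val = 0))

/-!
Send the cycle vertex `i` to `i : ZMod n` and the pendant vertex to `0`, the position of its
neighbour. Distances between cycle vertices are the cyclic distances `|(x - y).valMinAbs|`, and
the pendant vertex is one further from everything than the vertex `0`.

For a cycle edge `uv`, the reflection `x ↦ u + v - x` of `ZMod n` swaps the cycle vertices closer
to `u` with those closer to `v`; for even `n` no vertex is equidistant from `u` and `v` by parity.
So `n_u` and `n_v` differ only through the pendant vertex, and the edge contributes `1`. Across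
the pendant edge only the pendant vertex is on its own side, so it contributes `n - 1`, and
`Mo = n · 1 + (n - 1)`.
-/

namespace ZMod

variable {n : ℕ}

theorem castHom_eq_natAbs_valMinAbs (h : 2 ∣ n) (x : ZMod n) :
    castHom h (ZMod 2) x = (x.valMinAbs.natAbs : ZMod 2) := by
  conv_lhs => rw [← coe_valMinAbs x, map_intCast]
  rcases Int.natAbs_eq x.valMinAbs with hx | hx
  · rw [hx, Int.natAbs_natCast, Int.cast_natCast]
  · rw [hx, Int.natAbs_neg, Int.natAbs_natCast, Int.cast_neg, Int.cast_natCast,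
      neg_eq_self_mod_two]

theorem natAbs_valMinAbs_add_one_ne (h : 2 ∣ n) (x : ZMod n) :
    (x + 1).valMinAbs.natAbs ≠ x.valMinAbs.natAbs := by
  intro hx
  have := congrArg (Nat.cast : ℕ → ZMod 2) hx
  rw [← castHom_eq_natAbs_valMinAbs h, ← castHom_eq_natAbs_valMinAbs h, map_add, map_one]
    at this
  simp at this

theorem card_filter_natAbs_valMinAbs_sub_lt_comm [NeZero n] (a b : ZMod n) :
    #{x | (x - a).valMinAbs.natAbs < (x - b).valMinAbs.natAbs} =
      #{x | (x - b).valMinAbs.natAbs < (x - a).valMinAbs.natAbs} := by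
  refine card_equiv (Equiv.subLeft (a + b)) fun x => ?_
  simp only [mem_filter, mem_univ, true_and, Equiv.subLeft_apply]
  rw [show a + b - x - a = -(x - b) by ring, show a + b - x - b = -(x - a) by ring,
    natAbs_valMinAbs_neg, natAbs_valMinAbs_neg]

end ZMod

namespace SimpleGraph

variable {V : Type*} {G : SimpleGraph V}

theorem natAbs_valMinAbs_sub_le_length {n : ℕ} {f : V → ZMod n}
    (hf : ∀ x y, G.Adj x y → (f x - f y).valMinAbs.natAbs ≤ 1) {a b : V} (W : G.Walk a b) :
    (f a - f b).valMinAbs.natAbs ≤ W.length := by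
  induction W with
  | nil => simp
  | @cons a b c hab W ih =>
    calc (f a - f c).valMinAbs.natAbs
        ≤ (f a - f b).valMinAbs.natAbs + (f b - f c).valMinAbs.natAbs := by
          simpa using (ZMod.natAbs_valMinAbs_add_le (f a - f b) (f b - f c)).trans
            (Int.natAbs_add_le _ _)
      _ ≤ 1 + W.length := add_le_add (hf a b hab) ih
      _ = (W.cons hab).length := by rw [Walk.length_cons, add_comm]

theorem natAbs_valMinAbs_sub_le_dist {n : ℕ} {f : V → ZMod n}
    (hf : ∀ x y, G.Adj x y → (f x - f y).valMinAbs.natAbs ≤ 1) {a b : V}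
    (h : G.Reachable a b) :
    (f a - f b).valMinAbs.natAbs ≤ G.dist a b := by
  obtain ⟨W, hW⟩ := h.exists_walk_length_eq_dist
  exact hW ▸ natAbs_valMinAbs_sub_le_length hf W

theorem dist_eq_dist_add_one_of_neighborSet_eq_singleton {p z w : V}
    (hp : G.neighborSet p = {z}) (hw : w ≠ p) (hzw : G.Reachable z w) :
    G.dist p w = G.dist z w + 1 := by
  have hpz : G.Adj p z := by rw [← mem_neighborSet, hp]; rfl
  apply le_antisymm
  · obtain ⟨W, hW⟩ := hzw.exists_walk_length_eq_dist
    simpa [hW] using G.dist_le (W.cons hpz)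
  · obtain ⟨W, hW⟩ := (hpz.reachable.trans hzw).exists_walk_length_eq_dist
    cases W with
    | nil => exact absurd rfl hw
    | @cons _ y _ hpy W =>
      obtain rfl : y = z := by rw [← Set.mem_singleton_iff, ← hp]; exact hpy
      rw [← hW, Walk.length_cons]
      exact Nat.succ_le_succ (G.dist_le W)

theorem contrib_of_neighborSet_eq_singleton [Fintype V] (hG : G.Connected) {p z : V}
    (hp : G.neighborSet p = {z}) : contrib G p z = Fintype.card V - 2 := by
  classical
  have hpz : G.Adj p z := by rw [← mem_neighborSet, hp]; rfl
  have hdist : ∀ w ≠ p, G.dist w p = G.dist w z + 1 := fun w hw => by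
    rw [dist_comm, dist_comm (u := w)]
    exact dist_eq_dist_add_one_of_neighborSet_eq_singleton hp hw (hG z w)
  have hp_closer : ({w | G.dist w p < G.dist w z} : Finset V) = {p} := by
    ext w
    simp only [mem_filter, mem_univ, true_and, mem_singleton]
    refine ⟨fun h => by_contra fun hw => ?_, ?_⟩
    · rw [hdist w hw] at h; omega
    · rintro rfl; simp [dist_eq_one_iff_adj.mpr hpz]
  have hz_closer : ({w | G.dist w z < G.dist w p} : Finset V) = univ.erase p := by
    ext w
    simp only [mem_filter, mem_univ, true_and, mem_erase, and_true]
    refine ⟨?_, fun hw => by rw [hdist w hw]; omega⟩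
    rintro h rfl; simp at h
  have hcard : 1 < Fintype.card V := Fintype.one_lt_card_iff_nontrivial.mpr ⟨p, z, hpz.ne⟩
  rw [contrib, nCloser, nCloser, hp_closer, hz_closer, card_singleton,
    card_erase_of_mem (mem_univ p), card_univ]
  omega

end SimpleGraph

namespace cyclePlusPendant

variable {n : ℕ}

def pos (a : Fin (n + 1)) : ZMod n := a.val

theorem pos_zero : pos (0 : Fin (n + 1)) = 0 := by simp [pos]

theorem pos_last : pos (Fin.last n) = 0 := ZMod.natCast_self n

theorem pos_eq_pos_iff {a b : Fin (n + 1)} (ha : a ≠ Fin.last n) (hb : b ≠ Fin.last n) :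
    pos a = pos b ↔ a = b := by
  rw [pos, pos, ZMod.natCast_eq_natCast_iff', Nat.mod_eq_of_lt (Fin.val_lt_last ha),
    Nat.mod_eq_of_lt (Fin.val_lt_last hb), Fin.val_inj]

section

variable [NeZero n]

def next (a : Fin (n + 1)) : Fin (n + 1) :=
  if a = Fin.last n then 0
  else ⟨(a.val + 1) % n, (Nat.mod_lt _ (NeZero.pos n)).trans n.lt_succ_self⟩

theorem next_last : next (Fin.last n) = 0 := if_pos rfl

theorem next_ne_last (a : Fin (n + 1)) : next a ≠ Fin.last n := by
  unfold next
  split_ifs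
  · exact Fin.last_pos'.ne
  · rw [Ne, Fin.ext_iff, Fin.val_last]
    exact (Nat.mod_lt _ (NeZero.pos n)).ne

theorem pos_next {a : Fin (n + 1)} (ha : a ≠ Fin.last n) : pos (next a) = pos a + 1 := by
  simp [next, ha, pos]

theorem adj_iff {a b : Fin (n + 1)} :
    (cyclePlusPendant n).Adj a b ↔ a ≠ b ∧ (b = next a ∨ a = next b) := by
  have hrel : ∀ a b : Fin (n + 1),
      ((a.val < n ∧ b.val < n ∧ (a.val + 1) % n = b.val) ∨ (a.val = n ∧ b.val = 0)) ↔
        b = next a := by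
    intro a b
    by_cases ha : a = Fin.last n
    · subst ha
      simp only [Fin.val_last, next_last, Fin.ext_iff, Fin.val_zero, true_and]
      omega
    · have := Fin.val_lt_last ha
      have := Nat.mod_lt (a.val + 1) (NeZero.pos n)
      simp only [next, ha, if_false, Fin.ext_iff]
      omega
  rw [cyclePlusPendant, fromRel_adj, hrel, hrel]

theorem neighborSet_last : (cyclePlusPendant n).neighborSet (Fin.last n) = {0} := by
  ext b
  simp only [mem_neighborSet, adj_iff, next_last, Set.mem_singleton_iff]
  constructor
  · rintro ⟨-, hb | hb⟩
    · exact hb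
    · exact absurd hb.symm (next_ne_last b)
  · rintro rfl
    exact ⟨(Fin.last_pos' (n := n)).ne', Or.inl rfl⟩

theorem natAbs_valMinAbs_pos_sub_le_one {a b : Fin (n + 1)} (h : (cyclePlusPendant n).Adj a b) :
    (pos a - pos b).valMinAbs.natAbs ≤ 1 := by
  have hnext : ∀ c : Fin (n + 1), (pos (next c) - pos c).valMinAbs.natAbs ≤ 1 := by
    intro c
    by_cases hc : c = Fin.last n
    · simp [hc, next_last, pos_zero, pos_last]
    · rw [pos_next hc, add_sub_cancel_left, ZMod.valMinAbs_natAbs_eq_min]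
      refine (min_le_left _ _).trans ?_
      rw [← Nat.cast_one, ZMod.val_natCast]
      exact Nat.mod_le 1 n
  rcases (adj_iff.mp h).2 with rfl | rfl
  · rw [← ZMod.natAbs_valMinAbs_neg, neg_sub]
    exact hnext a
  · exact hnext b


theorem card_filter_pos (P : ZMod n → Prop) [DecidablePred P] :
    #{a : Fin (n + 1) | P (pos a)} = #{x : ZMod n | P x} + if P 0 then 1 else 0 := by
  have hbij : Function.Bijective fun i : Fin n => pos i.castSucc := by
    refine (Fintype.bijective_iff_injective_and_card _).mpr ⟨fun i j hij => ?_, by simp⟩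
    exact Fin.castSucc_injective n
      ((pos_eq_pos_iff (Fin.castSucc_ne_last i) (Fin.castSucc_ne_last j)).mp hij)
  rw [card_filter, card_filter, Fin.sum_univ_castSucc, pos_last]
  congr 1
  exact Fintype.sum_bijective _ hbij _ _ fun _ => rfl

theorem injective_mk_next (hn : 2 < n) :
    Function.Injective fun a : Fin (n + 1) => s(a, next a) := by
  intro a b hab
  rcases Sym2.eq_iff.mp hab with ⟨h, -⟩ | ⟨rfl, hb⟩
  · exact h
  · have h2 : pos b = pos b + ((2 : ℕ) : ZMod n) := by
      conv_lhs => rw [← hb]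
      rw [pos_next (next_ne_last b), pos_next (hb ▸ next_ne_last _)]
      push_cast
      ring
    rw [left_eq_add, ZMod.natCast_eq_zero_iff] at h2
    exact absurd (Nat.le_of_dvd two_pos h2) (by omega)

end

section

variable [Fact (1 < n)]

theorem adj_next (a : Fin (n + 1)) : (cyclePlusPendant n).Adj a (next a) := by
  refine adj_iff.mpr ⟨fun h => ?_, Or.inl rfl⟩
  by_cases ha : a = Fin.last n
  · exact next_ne_last a (h ▸ ha)
  · have := pos_next ha
    rw [← h, left_eq_add] at this
    exact one_ne_zero this

theorem exists_walk_length_eq (k : ℕ) {a b : Fin (n + 1)} (ha : a ≠ Fin.last n)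
    (hb : b ≠ Fin.last n) (hab : pos b = pos a + k) :
    ∃ W : (cyclePlusPendant n).Walk a b, W.length = k := by
  induction k generalizing a with
  | zero =>
    obtain rfl : a = b := (pos_eq_pos_iff ha hb).mp (by simpa using hab.symm)
    exact ⟨.nil, rfl⟩
  | succ k ih =>
    obtain ⟨W, hW⟩ := ih (next_ne_last a) (by rw [hab, pos_next ha]; push_cast; ring)
    exact ⟨W.cons (adj_next a), by rw [Walk.length_cons, hW]⟩

theorem dist_eq_of_ne_last {a b : Fin (n + 1)} (ha : a ≠ Fin.last n) (hb : b ≠ Fin.last n) :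
    (cyclePlusPendant n).dist a b = (pos a - pos b).valMinAbs.natAbs := by
  set d := (pos a - pos b).valMinAbs.natAbs
  obtain ⟨W, hW⟩ : ∃ W : (cyclePlusPendant n).Walk a b, W.length = d := by
    have hd := ZMod.coe_valMinAbs (pos a - pos b)
    rcases Int.natAbs_eq (pos a - pos b).valMinAbs with h | h
    · rw [h, Int.cast_natCast] at hd
      obtain ⟨W, hW⟩ := exists_walk_length_eq d hb ha (eq_add_of_sub_eq' hd.symm)
      exact ⟨W.reverse, by rw [Walk.length_reverse, hW]⟩
    · rw [h, Int.cast_neg, Int.cast_natCast, neg_eq_iff_eq_neg, neg_sub] at hd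
      exact exists_walk_length_eq d ha hb (eq_add_of_sub_eq' hd.symm)
  exact le_antisymm (hW ▸ dist_le W)
    (natAbs_valMinAbs_sub_le_dist (fun _ _ => natAbs_valMinAbs_pos_sub_le_one) ⟨W⟩)

theorem connected : (cyclePlusPendant n).Connected := by
  have hreach : ∀ b, (cyclePlusPendant n).Reachable 0 b := by
    intro b
    by_cases hb : b = Fin.last n
    · rw [hb, ← next_last]
      exact (adj_next _).reachable.symm
    · obtain ⟨W, -⟩ := exists_walk_length_eq (pos b).val (Fin.last_pos' (n := n)).ne hb
        (by rw [pos_zero, zero_add, ZMod.natCast_zmod_val])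
      exact ⟨W⟩
  exact ⟨fun a b => (hreach a).symm.trans (hreach b)⟩

theorem dist_eq (a : Fin (n + 1)) {b : Fin (n + 1)} (hb : b ≠ Fin.last n) :
    (cyclePlusPendant n).dist a b =
      (pos a - pos b).valMinAbs.natAbs + if a = Fin.last n then 1 else 0 := by
  by_cases ha : a = Fin.last n
  · subst ha
    rw [if_pos rfl, dist_eq_dist_add_one_of_neighborSet_eq_singleton neighborSet_last hb
      (connected.preconnected 0 b), dist_eq_of_ne_last (Fin.last_pos' (n := n)).ne hb,
      pos_zero, pos_last]
  · rw [if_neg ha, add_zero, dist_eq_of_ne_last ha hb]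

theorem nCloser_eq {u v : Fin (n + 1)} (hu : u ≠ Fin.last n) (hv : v ≠ Fin.last n) :
    nCloser (cyclePlusPendant n) u v =
      #{x : ZMod n | (x - pos u).valMinAbs.natAbs < (x - pos v).valMinAbs.natAbs} +
        if (0 - pos u).valMinAbs.natAbs < (0 - pos v).valMinAbs.natAbs then 1 else 0 := by
  rw [nCloser, ← card_filter_pos]
  congr 1
  ext w
  simp only [mem_filter, mem_univ, true_and, dist_eq w hu, dist_eq w hv, add_lt_add_iff_right]

theorem contrib_next (hn : Even n) {a : Fin (n + 1)} (ha : a ≠ Fin.last n) :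
    contrib (cyclePlusPendant n) a (next a) = 1 := by
  have htie : (0 - pos a).valMinAbs.natAbs ≠ (0 - pos (next a)).valMinAbs.natAbs := by
    rw [pos_next ha, show 0 - pos a = 0 - (pos a + 1) + 1 by ring]
    exact ZMod.natAbs_valMinAbs_add_one_ne (even_iff_two_dvd.mp hn) _
  rw [contrib, nCloser_eq ha (next_ne_last a), nCloser_eq (next_ne_last a) ha,
    ZMod.card_filter_natAbs_valMinAbs_sub_lt_comm (pos a)]
  split_ifs <;> omega

theorem contrib_last : contrib (cyclePlusPendant n) (Fin.last n) 0 = n - 1 := by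
  rw [contrib_of_neighborSet_eq_singleton connected neighborSet_last, Fintype.card_fin]
  omega

open scoped Classical in
theorem edgeFinset_eq_image :
    (cyclePlusPendant n).edgeFinset = univ.image fun a => s(a, next a) := by
  ext e
  induction e using Sym2.ind with
  | h a b =>
    rw [mem_edgeFinset, mem_edgeSet, mem_image]
    constructor
    · intro h
      rcases (adj_iff.mp h).2 with rfl | rfl
      · exact ⟨a, mem_univ _, rfl⟩
      · exact ⟨b, mem_univ _, Sym2.eq_swap⟩
    · rintro ⟨c, -, hc⟩
      rw [← mem_edgeSet, ← hc, mem_edgeSet]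
      exact adj_next c

end

theorem mostar_eq_of_even (hn : Even n) (h2 : 2 < n) :
    mostar (cyclePlusPendant n) = 2 * n - 1 := by
  have : Fact (1 < n) := ⟨by omega⟩
  rw [mostar, edgeFinset_eq_image, sum_image fun a _ b _ h => injective_mk_next h2 h]
  simp only [Sym2.lift_mk]
  rw [Fin.sum_univ_castSucc, next_last, contrib_last]
  simp only [contrib_next hn (Fin.castSucc_ne_last _), sum_const, card_univ, Fintype.card_fin,
    smul_eq_mul, mul_one]
  omega

end cyclePlusPendant

theorem mostar_cyclePlusPendant (m : ℕ) (hm : 2 ≤ m) :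
    mostar (cyclePlusPendant (2 * m)) = 4 * m - 1 := by
  rw [cyclePlusPendant.mostar_eq_of_even (even_two_mul m) (by omega)]
  omega
end

section
/- For every m ≥ 2, let G be the graph obtained from the odd cycle C_{2m+1} with vertices v_1,…,v_{2m+1} by attaching a new pendent vertex v to v_{m+1} and adding the chord v_2 v_{2m+1}. Then Mo(G) = 4m + 1. -/
open SimpleGraph Finset

/-- The graph obtained from the odd cycle `C_{2m+1}` (with vertices
`v_1, …, v_{2m+1}` represented by `0, …, 2m`) by attaching the pendent vertex
`2m+1` to `v_{m+1}` (index `m`) and adding the chord `v_2 v_{2m+1}`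
(between indices `1` and `2m`). -/
def oddCycleChordPendant (m : ℕ) : SimpleGraph (Fin (2 * m + 2)) :=
  SimpleGraph.fromRel (fun u v =>
    (u.val < 2 * m + 1 ∧ v.val < 2 * m + 1 ∧ (u.val + 1) % (2 * m + 1) = v.val) ∨
    (u.val = 1 ∧ v.val = 2 * m) ∨ (u.val = 2 * m + 1 ∧ v.val = m))

def cDaux (m a b : ℕ) : ℕ :=
  if a = 0 then (if b = 0 then 0 else 1 + min (b-1) (2*m-b))
  else if b = 0 then 1 + min (a-1) (2*m-a)
  else min (max a b - min a b) (2*m - (max a b - min a b))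

def Daux (m x y : ℕ) : ℕ :=
  if x = 2*m+1 then (if y = 2*m+1 then 0 else 1 + cDaux m m y)
  else if y = 2*m+1 then 1 + cDaux m m x
  else cDaux m x y

def Naux (m a b : ℕ) : Prop :=
  (a+1 = b ∧ b ≤ 2*m) ∨ (b+1 = a ∧ a ≤ 2*m) ∨ (a = 2*m ∧ b = 0) ∨ (a = 0 ∧ b = 2*m)
  ∨ (a = 1 ∧ b = 2*m) ∨ (a = 2*m ∧ b = 1) ∨ (a = m ∧ b = 2*m+1) ∨ (a = 2*m+1 ∧ b = m)

/-- fully linear description of `Daux m x y = d` for `x y ≤ 2m+1`. -/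
def DP (m x y d : ℕ) : Prop :=
  (x = 2*m+1 ∧ y = 2*m+1 ∧ d = 0) ∨
  (x = 2*m+1 ∧ y = 0 ∧ d = m+1) ∨
  (x = 2*m+1 ∧ 1 ≤ y ∧ y ≤ m ∧ d = 1 + (m - y)) ∨
  (x = 2*m+1 ∧ m < y ∧ y ≤ 2*m ∧ d = 1 + (y - m)) ∨
  (x = 0 ∧ y = 2*m+1 ∧ d = m+1) ∨
  (1 ≤ x ∧ x ≤ m ∧ y = 2*m+1 ∧ d = 1 + (m - x)) ∨
  (m < x ∧ x ≤ 2*m ∧ y = 2*m+1 ∧ d = 1 + (x - m)) ∨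
  (x = 0 ∧ y = 0 ∧ d = 0) ∨
  (x = 0 ∧ 1 ≤ y ∧ 2*y ≤ 2*m+1 ∧ d = y) ∨
  (x = 0 ∧ 2*m+2 ≤ 2*y ∧ y ≤ 2*m ∧ d = 1 + 2*m - y) ∨
  (1 ≤ x ∧ 2*x ≤ 2*m+1 ∧ y = 0 ∧ d = x) ∨
  (2*m+2 ≤ 2*x ∧ x ≤ 2*m ∧ y = 0 ∧ d = 1 + 2*m - x) ∨
  (1 ≤ x ∧ x ≤ y ∧ y ≤ 2*m ∧ 2*(y-x) ≤ 2*m ∧ d = y - x) ∨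
  (1 ≤ x ∧ x ≤ y ∧ y ≤ 2*m ∧ 2*m < 2*(y-x) ∧ d = 2*m - (y - x)) ∨
  (1 ≤ y ∧ y < x ∧ x ≤ 2*m ∧ 2*(x-y) ≤ 2*m ∧ d = x - y) ∨
  (1 ≤ y ∧ y < x ∧ x ≤ 2*m ∧ 2*m < 2*(x-y) ∧ d = 2*m - (x - y))

lemma cD_00 (m : ℕ) : cDaux m 0 0 = 0 := by
  unfold cDaux; rw [if_pos rfl, if_pos rfl]

lemma cD_0b (m b : ℕ) (hb : 1 ≤ b) : cDaux m 0 b = 1 + min (b-1) (2*m-b) := by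
  unfold cDaux; rw [if_pos rfl, if_neg (by omega)]

lemma cD_a0 (m a : ℕ) (ha : 1 ≤ a) : cDaux m a 0 = 1 + min (a-1) (2*m-a) := by
  unfold cDaux; rw [if_neg (by omega), if_pos rfl]

lemma cD_ab (m a b : ℕ) (ha : 1 ≤ a) (hb : 1 ≤ b) :
    cDaux m a b = min (max a b - min a b) (2*m - (max a b - min a b)) := by
  unfold cDaux; rw [if_neg (by omega), if_neg (by omega)]

lemma Daux_pp (m : ℕ) : Daux m (2*m+1) (2*m+1) = 0 := by
  unfold Daux; rw [if_pos rfl, if_pos rfl]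

lemma Daux_pc (m y : ℕ) (hy : y ≤ 2*m) : Daux m (2*m+1) y = 1 + cDaux m m y := by
  unfold Daux; rw [if_pos rfl, if_neg (by omega)]

lemma Daux_cp (m x : ℕ) (hx : x ≤ 2*m) : Daux m x (2*m+1) = 1 + cDaux m m x := by
  unfold Daux; rw [if_neg (by omega), if_pos rfl]

lemma Daux_cc (m x y : ℕ) (hx : x ≤ 2*m) (hy : y ≤ 2*m) : Daux m x y = cDaux m x y := by
  unfold Daux; rw [if_neg (by omega), if_neg (by omega)]

lemma Daux_val (m x y : ℕ) (hm : 1 ≤ m) (hx : x ≤ 2*m+1) (hy : y ≤ 2*m+1) :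
    DP m x y (Daux m x y) := by
  unfold DP
  by_cases hx1 : x = 2*m+1
  · subst hx1
    by_cases hy1 : y = 2*m+1
    · subst hy1; rw [Daux_pp]
      exact .inl ⟨rfl, rfl, rfl⟩
    rw [Daux_pc m y (by omega)]
    by_cases hy0 : y = 0
    · subst hy0; rw [cD_a0 m m hm, min_eq_left (by omega)]
      exact .inr (.inl ⟨rfl, rfl, by omega⟩)
    rw [cD_ab m m y hm (by omega)]
    by_cases hym : y ≤ m
    · rw [max_eq_left hym, min_eq_right hym, min_eq_left (by omega)]
      exact .inr (.inr (.inl ⟨rfl, by omega, hym, by omega⟩))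
    · rw [max_eq_right (by omega : m ≤ y), min_eq_left (by omega : m ≤ y),
        min_eq_left (by omega)]
      exact .inr (.inr (.inr (.inl ⟨rfl, by omega, by omega, by omega⟩)))
  by_cases hy1 : y = 2*m+1
  · subst hy1
    rw [Daux_cp m x (by omega)]
    by_cases hx0 : x = 0
    · subst hx0; rw [cD_a0 m m hm, min_eq_left (by omega)]
      exact .inr (.inr (.inr (.inr (.inl ⟨rfl, rfl, by omega⟩))))
    rw [cD_ab m m x hm (by omega)]
    by_cases hxm : x ≤ m
    · rw [max_eq_left hxm, min_eq_right hxm, min_eq_left (by omega)]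
      exact .inr (.inr (.inr (.inr (.inr (.inl ⟨by omega, hxm, rfl, by omega⟩)))))
    · rw [max_eq_right (by omega : m ≤ x), min_eq_left (by omega : m ≤ x),
        min_eq_left (by omega)]
      exact .inr (.inr (.inr (.inr (.inr (.inr (.inl
        ⟨by omega, by omega, rfl, by omega⟩))))))
  rw [Daux_cc m x y (by omega) (by omega)]
  by_cases hx0 : x = 0
  · subst hx0
    by_cases hy0 : y = 0
    · subst hy0; rw [cD_00]
      exact .inr (.inr (.inr (.inr (.inr (.inr (.inr (.inl ⟨rfl, rfl, rfl⟩)))))))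
    rw [cD_0b m y (by omega)]
    by_cases h9 : 2*y ≤ 2*m+1
    · rw [min_eq_left (by omega)]
      exact .inr (.inr (.inr (.inr (.inr (.inr (.inr (.inr (.inl
        ⟨rfl, by omega, h9, by omega⟩))))))))
    · rw [min_eq_right (by omega)]
      exact .inr (.inr (.inr (.inr (.inr (.inr (.inr (.inr (.inr (.inl
        ⟨rfl, by omega, by omega, by omega⟩)))))))))
  by_cases hy0 : y = 0
  · subst hy0
    rw [cD_a0 m x (by omega)]
    by_cases h11 : 2*x ≤ 2*m+1
    · rw [min_eq_left (by omega)]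
      exact .inr (.inr (.inr (.inr (.inr (.inr (.inr (.inr (.inr (.inr (.inl
        ⟨by omega, h11, rfl, by omega⟩))))))))))
    · rw [min_eq_right (by omega)]
      exact .inr (.inr (.inr (.inr (.inr (.inr (.inr (.inr (.inr (.inr (.inr (.inl
        ⟨by omega, by omega, rfl, by omega⟩)))))))))))
  rw [cD_ab m x y (by omega) (by omega)]
  by_cases hxy : x ≤ y
  · rw [max_eq_right hxy, min_eq_left hxy]
    by_cases h13 : 2*(y-x) ≤ 2*m
    · rw [min_eq_left (by omega)]
      exact .inr (.inr (.inr (.inr (.inr (.inr (.inr (.inr (.inr (.inr (.inr (.inr (.inl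
        ⟨by omega, hxy, by omega, h13, by omega⟩))))))))))))
    · rw [min_eq_right (by omega)]
      exact .inr (.inr (.inr (.inr (.inr (.inr (.inr (.inr (.inr (.inr (.inr (.inr (.inr (.inl
        ⟨by omega, hxy, by omega, by omega, by omega⟩)))))))))))))
  · rw [max_eq_left (by omega : y ≤ x), min_eq_right (by omega : y ≤ x)]
    by_cases h15 : 2*(x-y) ≤ 2*m
    · rw [min_eq_left (by omega)]
      exact .inr (.inr (.inr (.inr (.inr (.inr (.inr (.inr (.inr (.inr (.inr (.inr (.inr (.inr (.inl
        ⟨by omega, by omega, by omega, h15, by omega⟩))))))))))))))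
    · rw [min_eq_right (by omega)]
      exact .inr (.inr (.inr (.inr (.inr (.inr (.inr (.inr (.inr (.inr (.inr (.inr (.inr (.inr (.inr
        ⟨by omega, by omega, by omega, by omega, by omega⟩))))))))))))))

lemma Daux_self (m x : ℕ) (hm : 1 ≤ m) (hx : x ≤ 2*m+1) : Daux m x x = 0 := by
  have h := Daux_val m x x hm hx hx; unfold DP at h; omega

lemma Daux_comm (m x y : ℕ) (hm : 1 ≤ m) (hx : x ≤ 2*m+1) (hy : y ≤ 2*m+1) :
    Daux m x y = Daux m y x := by
  have h1 := Daux_val m x y hm hx hy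
  have h2 := Daux_val m y x hm hy hx
  unfold DP at h1 h2; omega

lemma Daux_eq_zero (m x y : ℕ) (hm : 1 ≤ m) (hx : x ≤ 2*m+1) (hy : y ≤ 2*m+1)
    (h : Daux m x y = 0) : x = y := by
  have h1 := Daux_val m x y hm hx hy; unfold DP at h1; omega

lemma Daux_lip (m x a b : ℕ) (hm : 2 ≤ m) (hx : x ≤ 2*m+1) (ha : a ≤ 2*m+1) (hb : b ≤ 2*m+1)
    (h : Naux m a b) : Daux m x a ≤ Daux m x b + 1 := by
  have h1 := Daux_val m x a (by omega) hx ha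
  have h2 := Daux_val m x b (by omega) hx hb
  unfold Naux at h; unfold DP at h1 h2; omega


set_option maxHeartbeats 1000000 in
lemma Daux_step (m x y : ℕ) (hm : 2 ≤ m) (hx : x ≤ 2*m+1) (hy : y ≤ 2*m+1) (hxy : x ≠ y) :
    ∃ z, z ≤ 2*m+1 ∧ Naux m y z ∧ Daux m x z + 1 = Daux m x y := by
  have key : ∀ z, z ≤ 2*m+1 → Naux m y z →
      (∀ d1 d2, DP m x z d1 → DP m x y d2 → d1 + 1 = d2) →
      ∃ z, z ≤ 2*m+1 ∧ Naux m y z ∧ Daux m x z + 1 = Daux m x y := by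
    intro z hz hN h
    exact ⟨z, hz, hN, h _ _ (Daux_val m x z (by omega) hx hz)
      (Daux_val m x y (by omega) hx hy)⟩
  by_cases h1 : y = 2*m+1
  · refine key m (by omega) (by unfold Naux; omega) ?_
    intro d1 d2 p1 p2; unfold DP at p1 p2; omega
  by_cases h2 : y = m ∧ x = 2*m+1
  · refine key (2*m+1) (by omega) (by unfold Naux; omega) ?_
    intro d1 d2 p1 p2; unfold DP at p1 p2; omega
  by_cases h3 : x = 2*m+1
  · by_cases h4 : y = 0
    · refine key 1 (by omega) (by unfold Naux; omega) ?_
      intro d1 d2 p1 p2; unfold DP at p1 p2; omega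
    by_cases h5 : y < m
    · refine key (y+1) (by omega) (by unfold Naux; omega) ?_
      intro d1 d2 p1 p2; unfold DP at p1 p2; omega
    · refine key (y-1) (by omega) (by unfold Naux; omega) ?_
      intro d1 d2 p1 p2; unfold DP at p1 p2; omega
  by_cases h4 : y = 0
  · by_cases h5 : 1 ≤ x ∧ x ≤ m
    · refine key 1 (by omega) (by unfold Naux; omega) ?_
      intro d1 d2 p1 p2; unfold DP at p1 p2; omega
    · refine key (2*m) (by omega) (by unfold Naux; omega) ?_
      intro d1 d2 p1 p2; unfold DP at p1 p2; omega
  by_cases h5 : x = 0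
  · by_cases h6 : y = 1 ∨ y = 2*m
    · refine key 0 (by omega) (by unfold Naux; omega) ?_
      intro d1 d2 p1 p2; unfold DP at p1 p2; omega
    by_cases h7 : y ≤ m
    · refine key (y-1) (by omega) (by unfold Naux; omega) ?_
      intro d1 d2 p1 p2; unfold DP at p1 p2; omega
    · refine key (y+1) (by omega) (by unfold Naux; omega) ?_
      intro d1 d2 p1 p2; unfold DP at p1 p2; omega
  by_cases h6 : x < y
  · by_cases h7 : y - x ≤ 2*m - (y-x)
    · refine key (y-1) (by omega) (by unfold Naux; omega) ?_
      intro d1 d2 p1 p2; unfold DP at p1 p2; omega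
    by_cases h8 : y = 2*m
    · refine key 1 (by omega) (by unfold Naux; omega) ?_
      intro d1 d2 p1 p2; unfold DP at p1 p2; omega
    · refine key (y+1) (by omega) (by unfold Naux; omega) ?_
      intro d1 d2 p1 p2; unfold DP at p1 p2; omega
  · by_cases h7 : x - y ≤ 2*m - (x-y)
    · refine key (y+1) (by omega) (by unfold Naux; omega) ?_
      intro d1 d2 p1 p2; unfold DP at p1 p2; omega
    by_cases h8 : y = 1
    · refine key (2*m) (by omega) (by unfold Naux; omega) ?_
      intro d1 d2 p1 p2; unfold DP at p1 p2; omega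
    · refine key (y-1) (by omega) (by unfold Naux; omega) ?_
      intro d1 d2 p1 p2; unfold DP at p1 p2; omega


lemma mod_succ_eq (m a : ℕ) (h : a ≤ 2*m+1) (hm : 1 ≤ m) :
    (a+1) % (2*m+1) = if a < 2*m then a+1 else if a = 2*m then 0 else 1 := by
  split_ifs with h1 h2
  · exact Nat.mod_eq_of_lt (by omega)
  · rw [show a = 2*m by omega]; exact Nat.mod_self _
  · rw [show a = 2*m+1 by omega, Nat.add_mod_left]; exact Nat.mod_eq_of_lt (by omega)

set_option maxHeartbeats 1000000 in
lemma adj_iff (m : ℕ) (hm : 1 ≤ m) (u v : Fin (2*m+2)) :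
    (oddCycleChordPendant m).Adj u v ↔ Naux m u.val v.val := by
  have ha := u.isLt; have hb := v.isLt
  unfold oddCycleChordPendant
  rw [SimpleGraph.fromRel_adj, ne_eq, Fin.ext_iff,
    mod_succ_eq m u.val (by omega) hm, mod_succ_eq m v.val (by omega) hm]
  unfold Naux
  split_ifs <;> omega

lemma exists_walk (m : ℕ) (hm : 2 ≤ m) :
    ∀ (d : ℕ) (u v : Fin (2*m+2)), Daux m u.val v.val ≤ d →
      ∃ W : (oddCycleChordPendant m).Walk u v, W.length ≤ Daux m u.val v.val := by
  intro d
  induction d with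
  | zero =>
    intro u v h
    have : u = v := Fin.ext (Daux_eq_zero m u.val v.val (by omega) (by omega) (by omega)
      (by omega))
    subst this; exact ⟨SimpleGraph.Walk.nil, by simp⟩
  | succ d ih =>
    intro u v h
    by_cases he : u = v
    · subst he; exact ⟨SimpleGraph.Walk.nil, by simp⟩
    · have hvne : u.val ≠ v.val := fun hh => he (Fin.ext hh)
      obtain ⟨z, hz, hN, hD⟩ := Daux_step m u.val v.val hm (by omega) (by omega) hvne
      have hadj : (oddCycleChordPendant m).Adj v ⟨z, by omega⟩ :=
        (adj_iff m (by omega) v ⟨z, by omega⟩).mpr hN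
      have hle : Daux m u.val z ≤ d := by omega
      obtain ⟨W, hW⟩ := ih u ⟨z, by omega⟩ hle
      have hW' : W.length ≤ Daux m u.val z := hW
      exact ⟨W.concat hadj.symm, by rw [SimpleGraph.Walk.length_concat]; omega⟩

lemma D_le_walk (m : ℕ) (hm : 2 ≤ m) (u v : Fin (2*m+2))
    (W : (oddCycleChordPendant m).Walk u v) : Daux m u.val v.val ≤ W.length := by
  induction W with
  | nil => rw [Daux_self m _ (by omega) (by omega)]; exact Nat.zero_le _
  | @cons a b c h p ih =>
    have hN : Naux m a.val b.val := (adj_iff m (by omega) a b).mp h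
    have lip := Daux_lip m c.val a.val b.val hm (by omega) (by omega) (by omega) hN
    have e1 := Daux_comm m a.val c.val (by omega) (by omega) (by omega)
    have e2 := Daux_comm m b.val c.val (by omega) (by omega) (by omega)
    rw [SimpleGraph.Walk.length_cons]
    omega

lemma dist_eq (m : ℕ) (hm : 2 ≤ m) (u v : Fin (2*m+2)) :
    (oddCycleChordPendant m).dist u v = Daux m u.val v.val := by
  obtain ⟨W, hW⟩ := exists_walk m hm (Daux m u.val v.val) u v le_rfl
  refine le_antisymm (le_trans (SimpleGraph.dist_le W) hW) ?_
  obtain ⟨P, hP⟩ := SimpleGraph.Reachable.exists_walk_length_eq_dist ⟨W⟩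
  rw [← hP]
  exact D_le_walk m hm u v P

lemma card_filter_val (n : ℕ) (P : ℕ → Prop) [DecidablePred P] :
    ((Finset.univ : Finset (Fin n)).filter (fun w => P w.val)).card
      = ((Finset.range n).filter P).card := by
  refine Finset.card_bij (fun w _ => w.val) ?_ ?_ ?_
  · intro a ha
    simp only [Finset.mem_filter, Finset.mem_univ, true_and] at ha
    simp only [Finset.mem_filter, Finset.mem_range]
    exact ⟨a.isLt, ha⟩
  · intro a _ b _ hab; exact Fin.val_injective hab
  · intro b hb
    simp only [Finset.mem_filter, Finset.mem_range] at hb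
    exact ⟨⟨b, hb.1⟩, by simp only [Finset.mem_filter, Finset.mem_univ, true_and]; exact hb.2, rfl⟩

lemma nCloser_eq (m : ℕ) (hm : 2 ≤ m) (u v : Fin (2*m+2)) :
    nCloser (oddCycleChordPendant m) u v
      = ((Finset.range (2*m+2)).filter (fun w => Daux m w u.val < Daux m w v.val)).card := by
  classical
  unfold nCloser
  rw [← card_filter_val (2*m+2) (fun w => Daux m w u.val < Daux m w v.val)]
  congr 1
  apply Finset.filter_congr
  intro x _
  rw [dist_eq m hm x u, dist_eq m hm x v]

lemma card_filter_two (n a b c d : ℕ) (hbc : b < c) (hb : b < n) (hd : d < n) :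
    ((Finset.range n).filter (fun w => (a ≤ w ∧ w ≤ b) ∨ (c ≤ w ∧ w ≤ d))).card
      = (b + 1 - a) + (d + 1 - c) := by
  rw [show (Finset.range n).filter (fun w => (a ≤ w ∧ w ≤ b) ∨ (c ≤ w ∧ w ≤ d))
      = Finset.Icc a b ∪ Finset.Icc c d by
    ext w
    simp only [Finset.mem_filter, Finset.mem_range, Finset.mem_union, Finset.mem_Icc]
    omega]
  rw [Finset.card_union_of_disjoint, Nat.card_Icc, Nat.card_Icc]
  rw [Finset.disjoint_left]
  intro w hw1 hw2
  simp only [Finset.mem_Icc] at hw1 hw2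
  omega

def vtx (m k : ℕ) : Fin (2*m+2) := ⟨k % (2*m+2), Nat.mod_lt _ (by omega)⟩

lemma vtx_val (m k : ℕ) (h : k < 2*m+2) : (vtx m k).val = k := Nat.mod_eq_of_lt h

lemma vtx_eq_iff (m i : ℕ) (hi : i < 2*m+2) (a : Fin (2*m+2)) : a = vtx m i ↔ a.val = i := by
  rw [Fin.ext_iff, vtx_val m i hi]


lemma count_helper (m a b A B C E : ℕ) (hm : 2 ≤ m)
    (hBC : B < C) (hB : B < 2*m+2) (hE : E < 2*m+2)
    (hQ : ∀ w, w < 2*m+2 → (Daux m w a < Daux m w b ↔ ((A ≤ w ∧ w ≤ B) ∨ (C ≤ w ∧ w ≤ E)))) :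
    ((Finset.range (2*m+2)).filter (fun w => Daux m w a < Daux m w b)).card
      = (B + 1 - A) + (E + 1 - C) := by
  rw [Finset.filter_congr (fun x hx => hQ x (Finset.mem_range.mp hx))]
  exact card_filter_two (2*m+2) A B C E hBC hB hE

lemma cnt_01u (m : ℕ) (hm : 2 ≤ m)  :
    ((Finset.range (2*m+2)).filter (fun w => Daux m w (0) < Daux m w (1))).card = 1 := by
  have hQ : ∀ w, w < 2*m+2 → (Daux m w (0) < Daux m w (1) ↔
      (((0) ≤ w ∧ w ≤ (0)) ∨ ((1) ≤ w ∧ w ≤ (0)))) := by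
    intro w hw
    have p1 := Daux_val m w (0) (by omega) (by omega) (by omega)
    have p2 := Daux_val m w (1) (by omega) (by omega) (by omega)
    unfold DP at p1 p2; omega
  rw [count_helper m (0) (1) (0) (0) (1) (0) hm (by omega) (by omega) (by omega) hQ]
  try omega

lemma cnt_01v (m : ℕ) (hm : 2 ≤ m)  :
    ((Finset.range (2*m+2)).filter (fun w => Daux m w (1) < Daux m w (0))).card = m+1 := by
  have hQ : ∀ w, w < 2*m+2 → (Daux m w (1) < Daux m w (0) ↔
      (((1) ≤ w ∧ w ≤ (m)) ∨ ((2*m+1) ≤ w ∧ w ≤ (2*m+1)))) := by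
    intro w hw
    have p1 := Daux_val m w (1) (by omega) (by omega) (by omega)
    have p2 := Daux_val m w (0) (by omega) (by omega) (by omega)
    unfold DP at p1 p2; omega
  rw [count_helper m (1) (0) (1) (m) (2*m+1) (2*m+1) hm (by omega) (by omega) (by omega) hQ]
  try omega

lemma cnt_k1u (m : ℕ) (hm : 2 ≤ m) (k : ℕ) (hk1 : 1 ≤ k) (hk2 : k < m) :
    ((Finset.range (2*m+2)).filter (fun w => Daux m w (k) < Daux m w (k+1))).card = m+1 := by
  have hQ : ∀ w, w < 2*m+2 → (Daux m w (k) < Daux m w (k+1) ↔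
      (((0) ≤ w ∧ w ≤ (k)) ∨ ((k+m+1) ≤ w ∧ w ≤ (2*m)))) := by
    intro w hw
    have p1 := Daux_val m w (k) (by omega) (by omega) (by omega)
    have p2 := Daux_val m w (k+1) (by omega) (by omega) (by omega)
    unfold DP at p1 p2; omega
  rw [count_helper m (k) (k+1) (0) (k) (k+m+1) (2*m) hm (by omega) (by omega) (by omega) hQ]
  try omega

lemma cnt_k1v (m : ℕ) (hm : 2 ≤ m) (k : ℕ) (hk1 : 1 ≤ k) (hk2 : k < m) :
    ((Finset.range (2*m+2)).filter (fun w => Daux m w (k+1) < Daux m w (k))).card = m+1 := by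
  have hQ : ∀ w, w < 2*m+2 → (Daux m w (k+1) < Daux m w (k) ↔
      (((k+1) ≤ w ∧ w ≤ (k+m)) ∨ ((2*m+1) ≤ w ∧ w ≤ (2*m+1)))) := by
    intro w hw
    have p1 := Daux_val m w (k+1) (by omega) (by omega) (by omega)
    have p2 := Daux_val m w (k) (by omega) (by omega) (by omega)
    unfold DP at p1 p2; omega
  rw [count_helper m (k+1) (k) (k+1) (k+m) (2*m+1) (2*m+1) hm (by omega) (by omega) (by omega) hQ]
  try omega

lemma cnt_mmu (m : ℕ) (hm : 2 ≤ m)  :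
    ((Finset.range (2*m+2)).filter (fun w => Daux m w (m) < Daux m w (m+1))).card = m+1 := by
  have hQ : ∀ w, w < 2*m+2 → (Daux m w (m) < Daux m w (m+1) ↔
      (((1) ≤ w ∧ w ≤ (m)) ∨ ((2*m+1) ≤ w ∧ w ≤ (2*m+1)))) := by
    intro w hw
    have p1 := Daux_val m w (m) (by omega) (by omega) (by omega)
    have p2 := Daux_val m w (m+1) (by omega) (by omega) (by omega)
    unfold DP at p1 p2; omega
  rw [count_helper m (m) (m+1) (1) (m) (2*m+1) (2*m+1) hm (by omega) (by omega) (by omega) hQ]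
  try omega

lemma cnt_mmv (m : ℕ) (hm : 2 ≤ m)  :
    ((Finset.range (2*m+2)).filter (fun w => Daux m w (m+1) < Daux m w (m))).card = m := by
  have hQ : ∀ w, w < 2*m+2 → (Daux m w (m+1) < Daux m w (m) ↔
      (((m+1) ≤ w ∧ w ≤ (2*m)) ∨ ((2*m+1) ≤ w ∧ w ≤ (0)))) := by
    intro w hw
    have p1 := Daux_val m w (m+1) (by omega) (by omega) (by omega)
    have p2 := Daux_val m w (m) (by omega) (by omega) (by omega)
    unfold DP at p1 p2; omega
  rw [count_helper m (m+1) (m) (m+1) (2*m) (2*m+1) (0) hm (by omega) (by omega) (by omega) hQ]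
  try omega

lemma cnt_k2u (m : ℕ) (hm : 2 ≤ m) (k : ℕ) (hk1 : m < k) (hk2 : k < 2*m) :
    ((Finset.range (2*m+2)).filter (fun w => Daux m w (k) < Daux m w (k+1))).card = m+1 := by
  have hQ : ∀ w, w < 2*m+2 → (Daux m w (k) < Daux m w (k+1) ↔
      (((k-m+1) ≤ w ∧ w ≤ (k)) ∨ ((2*m+1) ≤ w ∧ w ≤ (2*m+1)))) := by
    intro w hw
    have p1 := Daux_val m w (k) (by omega) (by omega) (by omega)
    have p2 := Daux_val m w (k+1) (by omega) (by omega) (by omega)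
    unfold DP at p1 p2; omega
  rw [count_helper m (k) (k+1) (k-m+1) (k) (2*m+1) (2*m+1) hm (by omega) (by omega) (by omega) hQ]
  try omega

lemma cnt_k2v (m : ℕ) (hm : 2 ≤ m) (k : ℕ) (hk1 : m < k) (hk2 : k < 2*m) :
    ((Finset.range (2*m+2)).filter (fun w => Daux m w (k+1) < Daux m w (k))).card = m+1 := by
  have hQ : ∀ w, w < 2*m+2 → (Daux m w (k+1) < Daux m w (k) ↔
      (((0) ≤ w ∧ w ≤ (k-m)) ∨ ((k+1) ≤ w ∧ w ≤ (2*m)))) := by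
    intro w hw
    have p1 := Daux_val m w (k+1) (by omega) (by omega) (by omega)
    have p2 := Daux_val m w (k) (by omega) (by omega) (by omega)
    unfold DP at p1 p2; omega
  rw [count_helper m (k+1) (k) (0) (k-m) (k+1) (2*m) hm (by omega) (by omega) (by omega) hQ]
  try omega

lemma cnt_c0u (m : ℕ) (hm : 2 ≤ m)  :
    ((Finset.range (2*m+2)).filter (fun w => Daux m w (2*m) < Daux m w (0))).card = m := by
  have hQ : ∀ w, w < 2*m+2 → (Daux m w (2*m) < Daux m w (0) ↔
      (((m+1) ≤ w ∧ w ≤ (2*m)) ∨ ((2*m+1) ≤ w ∧ w ≤ (0)))) := by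
    intro w hw
    have p1 := Daux_val m w (2*m) (by omega) (by omega) (by omega)
    have p2 := Daux_val m w (0) (by omega) (by omega) (by omega)
    unfold DP at p1 p2; omega
  rw [count_helper m (2*m) (0) (m+1) (2*m) (2*m+1) (0) hm (by omega) (by omega) (by omega) hQ]
  try omega

lemma cnt_c0v (m : ℕ) (hm : 2 ≤ m)  :
    ((Finset.range (2*m+2)).filter (fun w => Daux m w (0) < Daux m w (2*m))).card = 1 := by
  have hQ : ∀ w, w < 2*m+2 → (Daux m w (0) < Daux m w (2*m) ↔
      (((0) ≤ w ∧ w ≤ (0)) ∨ ((1) ≤ w ∧ w ≤ (0)))) := by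
    intro w hw
    have p1 := Daux_val m w (0) (by omega) (by omega) (by omega)
    have p2 := Daux_val m w (2*m) (by omega) (by omega) (by omega)
    unfold DP at p1 p2; omega
  rw [count_helper m (0) (2*m) (0) (0) (1) (0) hm (by omega) (by omega) (by omega) hQ]
  try omega

lemma cnt_chu (m : ℕ) (hm : 2 ≤ m)  :
    ((Finset.range (2*m+2)).filter (fun w => Daux m w (1) < Daux m w (2*m))).card = m+1 := by
  have hQ : ∀ w, w < 2*m+2 → (Daux m w (1) < Daux m w (2*m) ↔
      (((1) ≤ w ∧ w ≤ (m)) ∨ ((2*m+1) ≤ w ∧ w ≤ (2*m+1)))) := by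
    intro w hw
    have p1 := Daux_val m w (1) (by omega) (by omega) (by omega)
    have p2 := Daux_val m w (2*m) (by omega) (by omega) (by omega)
    unfold DP at p1 p2; omega
  rw [count_helper m (1) (2*m) (1) (m) (2*m+1) (2*m+1) hm (by omega) (by omega) (by omega) hQ]
  try omega

lemma cnt_chv (m : ℕ) (hm : 2 ≤ m)  :
    ((Finset.range (2*m+2)).filter (fun w => Daux m w (2*m) < Daux m w (1))).card = m := by
  have hQ : ∀ w, w < 2*m+2 → (Daux m w (2*m) < Daux m w (1) ↔
      (((m+1) ≤ w ∧ w ≤ (2*m)) ∨ ((2*m+1) ≤ w ∧ w ≤ (0)))) := by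
    intro w hw
    have p1 := Daux_val m w (2*m) (by omega) (by omega) (by omega)
    have p2 := Daux_val m w (1) (by omega) (by omega) (by omega)
    unfold DP at p1 p2; omega
  rw [count_helper m (2*m) (1) (m+1) (2*m) (2*m+1) (0) hm (by omega) (by omega) (by omega) hQ]
  try omega

lemma cnt_pdu (m : ℕ) (hm : 2 ≤ m)  :
    ((Finset.range (2*m+2)).filter (fun w => Daux m w (m) < Daux m w (2*m+1))).card = 2*m+1 := by
  have hQ : ∀ w, w < 2*m+2 → (Daux m w (m) < Daux m w (2*m+1) ↔
      (((0) ≤ w ∧ w ≤ (2*m)) ∨ ((2*m+1) ≤ w ∧ w ≤ (0)))) := by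
    intro w hw
    have p1 := Daux_val m w (m) (by omega) (by omega) (by omega)
    have p2 := Daux_val m w (2*m+1) (by omega) (by omega) (by omega)
    unfold DP at p1 p2; omega
  rw [count_helper m (m) (2*m+1) (0) (2*m) (2*m+1) (0) hm (by omega) (by omega) (by omega) hQ]
  try omega

lemma cnt_pdv (m : ℕ) (hm : 2 ≤ m)  :
    ((Finset.range (2*m+2)).filter (fun w => Daux m w (2*m+1) < Daux m w (m))).card = 1 := by
  have hQ : ∀ w, w < 2*m+2 → (Daux m w (2*m+1) < Daux m w (m) ↔
      (((2*m+1) ≤ w ∧ w ≤ (2*m+1)) ∨ ((2*m+2) ≤ w ∧ w ≤ (0)))) := by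
    intro w hw
    have p1 := Daux_val m w (2*m+1) (by omega) (by omega) (by omega)
    have p2 := Daux_val m w (m) (by omega) (by omega) (by omega)
    unfold DP at p1 p2; omega
  rw [count_helper m (2*m+1) (m) (2*m+1) (2*m+1) (2*m+2) (0) hm (by omega) (by omega) (by omega) hQ]
  try omega


lemma contrib_cyc (m k : ℕ) (hm : 2 ≤ m) (hk : k < 2*m) :
    contrib (oddCycleChordPendant m) (vtx m k) (vtx m (k+1))
      = if k = 0 then m else if k = m then 1 else 0 := by
  unfold contrib
  rw [nCloser_eq m hm (vtx m k) (vtx m (k+1)), nCloser_eq m hm (vtx m (k+1)) (vtx m k),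
    vtx_val m k (by omega), vtx_val m (k+1) (by omega)]
  by_cases h0 : k = 0
  · subst h0
    simp only [Nat.zero_add]
    rw [cnt_01u m hm, cnt_01v m hm]
    split_ifs <;> omega
  by_cases hkm : k < m
  · rw [cnt_k1u m hm k (by omega) hkm, cnt_k1v m hm k (by omega) hkm]
    split_ifs <;> omega
  by_cases hkm2 : k = m
  · rw [hkm2, cnt_mmu m hm, cnt_mmv m hm]
    split_ifs <;> omega
  · rw [cnt_k2u m hm k (by omega) hk, cnt_k2v m hm k (by omega) hk]
    split_ifs <;> omega

lemma contrib_c0 (m : ℕ) (hm : 2 ≤ m) :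
    contrib (oddCycleChordPendant m) (vtx m (2*m)) (vtx m 0) = m - 1 := by
  unfold contrib
  rw [nCloser_eq m hm (vtx m (2*m)) (vtx m 0), nCloser_eq m hm (vtx m 0) (vtx m (2*m)),
    vtx_val m (2*m) (by omega), vtx_val m 0 (by omega)]
  rw [cnt_c0u m hm, cnt_c0v m hm]
  omega

lemma contrib_ch (m : ℕ) (hm : 2 ≤ m) :
    contrib (oddCycleChordPendant m) (vtx m 1) (vtx m (2*m)) = 1 := by
  unfold contrib
  rw [nCloser_eq m hm (vtx m 1) (vtx m (2*m)), nCloser_eq m hm (vtx m (2*m)) (vtx m 1),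
    vtx_val m 1 (by omega), vtx_val m (2*m) (by omega)]
  rw [cnt_chu m hm, cnt_chv m hm]
  omega

lemma contrib_pd (m : ℕ) (hm : 2 ≤ m) :
    contrib (oddCycleChordPendant m) (vtx m m) (vtx m (2*m+1)) = 2*m := by
  unfold contrib
  rw [nCloser_eq m hm (vtx m m) (vtx m (2*m+1)), nCloser_eq m hm (vtx m (2*m+1)) (vtx m m),
    vtx_val m m (by omega), vtx_val m (2*m+1) (by omega)]
  rw [cnt_pdu m hm, cnt_pdv m hm]
  omega

noncomputable def ES (m : ℕ) : Finset (Sym2 (Fin (2*m+2))) :=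
  insert s(vtx m (2*m), vtx m 0) (insert s(vtx m 1, vtx m (2*m))
    (insert s(vtx m m, vtx m (2*m+1))
      ((Finset.range (2*m)).image (fun k => s(vtx m k, vtx m (k+1))))))

lemma sym2_eq_vtx (m : ℕ) (a b : Fin (2*m+2)) (i j : ℕ) (hi : i < 2*m+2) (hj : j < 2*m+2) :
    s(a, b) = s(vtx m i, vtx m j) ↔ ((a.val = i ∧ b.val = j) ∨ (a.val = j ∧ b.val = i)) := by
  rw [Sym2.eq_iff, vtx_eq_iff m i hi a, vtx_eq_iff m j hj b, vtx_eq_iff m j hj a,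
    vtx_eq_iff m i hi b]

lemma vtx_sym2_eq (m : ℕ) (a b : Fin (2*m+2)) (i j : ℕ) (hi : i < 2*m+2) (hj : j < 2*m+2) :
    s(vtx m i, vtx m j) = s(a, b) ↔ ((a.val = i ∧ b.val = j) ∨ (a.val = j ∧ b.val = i)) := by
  rw [eq_comm]; exact sym2_eq_vtx m a b i j hi hj

set_option maxHeartbeats 1000000 in
open scoped Classical in
lemma edgeFinset_eq (m : ℕ) (hm : 2 ≤ m) :
    (oddCycleChordPendant m).edgeFinset = ES m := by
  ext e
  induction e using Sym2.ind with
  | _ a b =>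
  rw [SimpleGraph.mem_edgeFinset, SimpleGraph.mem_edgeSet, adj_iff m (by omega)]
  unfold ES
  simp only [Finset.mem_insert, Finset.mem_image, Finset.mem_range]
  have ha := a.isLt
  have hb := b.isLt
  constructor
  · intro h
    unfold Naux at h
    rcases h with ⟨h1,h2⟩|⟨h1,h2⟩|⟨h1,h2⟩|⟨h1,h2⟩|⟨h1,h2⟩|⟨h1,h2⟩|⟨h1,h2⟩|⟨h1,h2⟩
    · exact .inr (.inr (.inr ⟨a.val, by omega,
        (vtx_sym2_eq m a b a.val (a.val+1) (by omega) (by omega)).mpr (by omega)⟩))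
    · exact .inr (.inr (.inr ⟨b.val, by omega,
        (vtx_sym2_eq m a b b.val (b.val+1) (by omega) (by omega)).mpr (by omega)⟩))
    · exact .inl ((sym2_eq_vtx m a b (2*m) 0 (by omega) (by omega)).mpr (by omega))
    · exact .inl ((sym2_eq_vtx m a b (2*m) 0 (by omega) (by omega)).mpr (by omega))
    · exact .inr (.inl ((sym2_eq_vtx m a b 1 (2*m) (by omega) (by omega)).mpr (by omega)))
    · exact .inr (.inl ((sym2_eq_vtx m a b 1 (2*m) (by omega) (by omega)).mpr (by omega)))
    · exact .inr (.inr (.inl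
        ((sym2_eq_vtx m a b m (2*m+1) (by omega) (by omega)).mpr (by omega))))
    · exact .inr (.inr (.inl
        ((sym2_eq_vtx m a b m (2*m+1) (by omega) (by omega)).mpr (by omega))))
  · intro h
    unfold Naux
    rcases h with h|h|h|⟨k,hk,h⟩
    · have := (sym2_eq_vtx m a b (2*m) 0 (by omega) (by omega)).mp h; omega
    · have := (sym2_eq_vtx m a b 1 (2*m) (by omega) (by omega)).mp h; omega
    · have := (sym2_eq_vtx m a b m (2*m+1) (by omega) (by omega)).mp h; omega
    · have := (vtx_sym2_eq m a b k (k+1) (by omega) (by omega)).mp h; omega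

set_option maxHeartbeats 2000000 in
theorem mostar_oddCycleChordPendant (m : ℕ) (hm : 2 ≤ m) :
    mostar (oddCycleChordPendant m) = 4 * m + 1 := by
  classical
  unfold mostar
  rw [edgeFinset_eq m hm]
  unfold ES
  have hni3 : s(vtx m m, vtx m (2*m+1))
      ∉ (Finset.range (2*m)).image (fun k => s(vtx m k, vtx m (k+1))) := by
    simp only [Finset.mem_image, Finset.mem_range]
    rintro ⟨k, hk, h⟩
    have := (vtx_sym2_eq m (vtx m m) (vtx m (2*m+1)) k (k+1) (by omega) (by omega)).mp h
    rw [vtx_val m m (by omega), vtx_val m (2*m+1) (by omega)] at this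
    omega
  have hni2 : s(vtx m 1, vtx m (2*m)) ∉ insert s(vtx m m, vtx m (2*m+1))
      ((Finset.range (2*m)).image (fun k => s(vtx m k, vtx m (k+1)))) := by
    simp only [Finset.mem_insert, Finset.mem_image, Finset.mem_range]
    rintro (h|⟨k, hk, h⟩)
    · have := (sym2_eq_vtx m (vtx m 1) (vtx m (2*m)) m (2*m+1) (by omega) (by omega)).mp h
      rw [vtx_val m 1 (by omega), vtx_val m (2*m) (by omega)] at this
      omega
    · have := (vtx_sym2_eq m (vtx m 1) (vtx m (2*m)) k (k+1) (by omega) (by omega)).mp h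
      rw [vtx_val m 1 (by omega), vtx_val m (2*m) (by omega)] at this
      omega
  have hni1 : s(vtx m (2*m), vtx m 0) ∉ insert s(vtx m 1, vtx m (2*m))
      (insert s(vtx m m, vtx m (2*m+1))
        ((Finset.range (2*m)).image (fun k => s(vtx m k, vtx m (k+1))))) := by
    simp only [Finset.mem_insert, Finset.mem_image, Finset.mem_range]
    rintro (h|h|⟨k, hk, h⟩)
    · have := (sym2_eq_vtx m (vtx m (2*m)) (vtx m 0) 1 (2*m) (by omega) (by omega)).mp h
      rw [vtx_val m (2*m) (by omega), vtx_val m 0 (by omega)] at this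
      omega
    · have := (sym2_eq_vtx m (vtx m (2*m)) (vtx m 0) m (2*m+1) (by omega) (by omega)).mp h
      rw [vtx_val m (2*m) (by omega), vtx_val m 0 (by omega)] at this
      omega
    · have := (vtx_sym2_eq m (vtx m (2*m)) (vtx m 0) k (k+1) (by omega) (by omega)).mp h
      rw [vtx_val m (2*m) (by omega), vtx_val m 0 (by omega)] at this
      omega
  have hinj : ∀ x ∈ Finset.range (2*m), ∀ y ∈ Finset.range (2*m),
      s(vtx m x, vtx m (x+1)) = s(vtx m y, vtx m (y+1)) → x = y := by
    intro x hx y hy h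
    simp only [Finset.mem_range] at hx hy
    have := (vtx_sym2_eq m (vtx m y) (vtx m (y+1)) x (x+1) (by omega) (by omega)).mp h
    rw [vtx_val m y (by omega), vtx_val m (y+1) (by omega)] at this
    omega
  rw [Finset.sum_insert hni1, Finset.sum_insert hni2, Finset.sum_insert hni3,
    Finset.sum_image hinj]
  simp only [Sym2.lift_mk]
  rw [contrib_c0 m hm, contrib_ch m hm, contrib_pd m hm]
  have hcong := Finset.sum_congr rfl
    (fun k hk => contrib_cyc m k hm (Finset.mem_range.mp hk))
  rw [hcong]
  have e : ∀ k ∈ Finset.range (2*m), (if k = 0 then m else if k = m then 1 else 0)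
      = (if k = 0 then m else 0) + (if k = m then 1 else 0) := by
    intro k _
    split_ifs <;> omega
  rw [Finset.sum_congr rfl e, Finset.sum_add_distrib,
    Finset.sum_ite_eq' (Finset.range (2*m)) 0 (fun _ => m),
    Finset.sum_ite_eq' (Finset.range (2*m)) m (fun _ => 1),
    if_pos (Finset.mem_range.mpr (by omega : (0:ℕ) < 2*m)),
    if_pos (Finset.mem_range.mpr (by omega : m < 2*m))]
  omega
end

section
/- There is no finite simple connected graph G with Mo(G) = 1. -/
open SimpleGraph Finset

section MostarAux

set_option linter.unusedSectionVars false

variable {V : Type*} [Fintype V] (G : SimpleGraph V)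

private lemma sum_nat_eq_one' {α : Type*} {s : Finset α} {f : α → ℕ}
    (h : ∑ a ∈ s, f a = 1) :
    ∃ a ∈ s, f a = 1 ∧ ∀ b ∈ s, b ≠ a → f b = 0 := by
  classical
  obtain ⟨a, ha, hfa⟩ := Finset.exists_ne_zero_of_sum_ne_zero (by omega : ∑ a ∈ s, f a ≠ 0)
  have hsplit : f a + ∑ b ∈ s.erase a, f b = 1 := by
    rw [Finset.add_sum_erase s f ha, h]
  have hz : ∑ b ∈ s.erase a, f b = 0 := by omega
  exact ⟨a, ha, by omega, fun b hb hba =>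
    (Finset.sum_eq_zero_iff).mp hz b (Finset.mem_erase.mpr ⟨hba, hb⟩)⟩

/-- transmission of a vertex -/
noncomputable def trT (x : V) : ℕ := ∑ w, G.dist w x

lemma dist_adj_le (hG : G.Connected) {x y : V} (h : G.Adj x y) (w : V) :
    G.dist w x ≤ G.dist w y + 1 := by
  have t := hG.dist_triangle (u := w) (v := y) (w := x)
  have : G.dist y x = 1 := SimpleGraph.dist_eq_one_iff_adj.mpr h.symm
  omega

lemma trans_sub (hG : G.Connected) {x y : V} (h : G.Adj x y) :
    (trT G x : ℤ) - trT G y = (nCloser G y x : ℤ) - nCloser G x y := by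
  classical
  have h1 := dist_adj_le G hG h
  have h2 := dist_adj_le G hG h.symm
  have key : ∀ w : V, ((G.dist w x : ℤ) - G.dist w y) =
      (if G.dist w y < G.dist w x then (1 : ℤ) else 0) -
      (if G.dist w x < G.dist w y then (1 : ℤ) else 0) := by
    intro w
    have := h1 w; have := h2 w
    split_ifs <;> push_cast <;> omega
  have hs : (trT G x : ℤ) - trT G y = ∑ w : V, ((G.dist w x : ℤ) - G.dist w y) := by
    rw [Finset.sum_sub_distrib]
    simp [trT]
  rw [hs, Finset.sum_congr rfl (fun w _ => key w), Finset.sum_sub_distrib,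
    Finset.sum_boole, Finset.sum_boole]
  simp [nCloser]

/-- walks from inside `S` to outside `S` must pass through `u` then `v`. -/
lemma crossing_dist (hG : G.Connected) {u v : V} (S : V → Prop)
    (hcross : ∀ x y, G.Adj x y → S x → ¬ S y → x = u ∧ y = v) :
    ∀ {w z : V} (p : G.Walk w z), S w → ¬ S z →
      G.dist w u + 1 + G.dist v z ≤ p.length := by
  intro w z p
  induction p with
  | nil => intro h1 h2; exact absurd h1 h2
  | @cons a b c hab q ih =>
    intro ha hc
    by_cases hb : S b
    · have hq := ih hb hc
      have tri := hG.dist_triangle (u := a) (v := b) (w := u)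
      have hab1 : G.dist a b = 1 := SimpleGraph.dist_eq_one_iff_adj.mpr hab
      simp only [SimpleGraph.Walk.length_cons]
      omega
    · obtain ⟨rfl, rfl⟩ := hcross a b hab ha hb
      have hq : G.dist b c ≤ q.length := SimpleGraph.dist_le q
      simp only [SimpleGraph.Walk.length_cons, SimpleGraph.dist_self]
      omega

lemma crossing_dist_eq (hG : G.Connected) {u v : V} (huv : G.Adj u v) (S : V → Prop)
    (hSv : ¬ S v)
    (hcross : ∀ x y, G.Adj x y → S x → ¬ S y → x = u ∧ y = v)
    {w : V} (hw : S w) : G.dist w v = G.dist w u + 1 := by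
  obtain ⟨p, hp⟩ := (hG w v).exists_walk_length_eq_dist
  have h1 := crossing_dist G hG S hcross p hw hSv
  have h2 := dist_adj_le G hG huv.symm w
  rw [hp] at h1
  simp only [SimpleGraph.dist_self] at h1
  omega

lemma exists_nbr {u v : V} (S : V → Prop)
    (hcross : ∀ x y, G.Adj x y → S x → ¬ S y → x = u ∧ y = v) :
    ∀ {x z : V} (p : G.Walk x z), S x → x ≠ u → z = u → ∃ y, G.Adj u y ∧ S y := by
  intro x z p
  induction p with
  | nil => intro _ hx hz; exact absurd hz hx
  | @cons a b c hab q ih =>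
    intro ha hau hc
    by_cases hb : b = c
    · subst hb hc; exact ⟨a, hab.symm, ha⟩
    · by_cases hSb : S b
      · exact ih hSb (by rw [hc] at hb; exact hb) hc
      · exact absurd (hcross a b hab ha hSb).1 hau

lemma count_aux (hG : G.Connected) {u v : V} (huv : G.Adj u v) (S : V → Prop)
    [DecidablePred S]
    (hSu : S u) (hSv : ¬ S v)
    (hcross : ∀ x y, G.Adj x y → S x → ¬ S y → x = u ∧ y = v)
    (hcross' : ∀ x y, G.Adj x y → ¬ S x → S y → x = v ∧ y = u)
    (hzero : ∀ y, G.Adj u y → S y → nCloser G u y = nCloser G y u)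
    (hP2 : 2 ≤ (Finset.univ.filter S).card) :
    (Finset.univ.filter (fun w => ¬ S w)).card + 2 ≤ (Finset.univ.filter S).card := by
  classical
  obtain ⟨x, hxP, hxu⟩ := Finset.exists_mem_ne (s := Finset.univ.filter S) (by omega) u
  have hSx : S x := (Finset.mem_filter.mp hxP).2
  obtain ⟨p⟩ := hG.preconnected x u
  obtain ⟨y, huy, hSy⟩ := exists_nbr G S hcross p hSx hxu rfl
  have hduy : G.dist u y = 1 := SimpleGraph.dist_eq_one_iff_adj.mpr huy
  have hout : ∀ w, ¬ S w → G.dist w v + 1 + G.dist u y ≤ G.dist w y := by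
    intro w hw
    obtain ⟨q, hq⟩ := (hG w y).exists_walk_length_eq_dist
    have := crossing_dist G hG (fun a => ¬ S a)
      (fun a b hab h1 h2 => hcross' a b hab h1 (not_not.mp h2)) q hw (not_not.mpr hSy)
    omega
  have htri : ∀ w, G.dist w u ≤ G.dist w v + 1 := dist_adj_le G hG huv
  have hsub1 : insert u (Finset.univ.filter fun w => ¬ S w) ⊆
      Finset.univ.filter (fun w => G.dist w u < G.dist w y) := by
    intro w hw
    simp only [Finset.mem_insert, Finset.mem_filter, Finset.mem_univ, true_and] at *
    rcases hw with rfl | hw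
    · simp [SimpleGraph.dist_self, hduy]
    · have := hout w hw; have := htri w; omega
  have hsub2 : Finset.univ.filter (fun w => G.dist w y < G.dist w u) ⊆
      (Finset.univ.filter S).erase u := by
    intro w hw
    simp only [Finset.mem_filter, Finset.mem_univ, true_and] at hw
    simp only [Finset.mem_erase, Finset.mem_filter, Finset.mem_univ, true_and]
    constructor
    · rintro rfl
      rw [SimpleGraph.dist_self, hduy] at hw
      omega
    · by_contra hw'
      have := hout w hw'; have := htri w; omega
  have hc1 : (insert u (Finset.univ.filter fun w => ¬ S w)).card
      = (Finset.univ.filter fun w => ¬ S w).card + 1 :=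
    Finset.card_insert_of_notMem (by simp [hSu])
  have hcard1 := Finset.card_le_card hsub1
  have hcard2 := Finset.card_le_card hsub2
  have hce : ((Finset.univ.filter S).erase u).card = (Finset.univ.filter S).card - 1 :=
    Finset.card_erase_of_mem (by simp [hSu])
  have heq := hzero y huy hSy
  have e1 : nCloser G u y = (Finset.univ.filter (fun w => G.dist w u < G.dist w y)).card := by
    simp [nCloser]
  have e2 : nCloser G y u = (Finset.univ.filter (fun w => G.dist w y < G.dist w u)).card := by
    simp [nCloser]
  omega

end MostarAux

theorem mostar_ne_one {V : Type*} [Fintype V] (G : SimpleGraph V)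
    (hG : G.Connected) : mostar G ≠ 1 := by
  classical
  intro hmo
  obtain ⟨e, he, he1, he0⟩ := sum_nat_eq_one' hmo
  revert he he1 he0
  induction e using Sym2.ind with
  | _ u v =>
  intro he he1 he0
  have huv : G.Adj u v := SimpleGraph.mem_edgeFinset.mp he
  have hc1 : contrib G u v = 1 := by simpa using he1
  have h0 : ∀ x y, G.Adj x y → s(x, y) ≠ s(u, v) → contrib G x y = 0 := by
    intro x y hxy hne
    have := he0 s(x, y) (SimpleGraph.mem_edgeFinset.mpr hxy) hne
    simpa using this
  -- transmission equalities
  have hT0 : ∀ x y, G.Adj x y → s(x, y) ≠ s(u, v) → trT G x = trT G y := by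
    intro x y hxy hne
    have h := h0 x y hxy hne
    simp only [contrib, Int.natAbs_eq_zero, sub_eq_zero] at h
    have ht := trans_sub G hG hxy
    rw [h] at ht
    omega
  have hTne : trT G u ≠ trT G v := by
    intro h
    have ht := trans_sub G hG huv
    rw [h, sub_self] at ht
    simp only [contrib] at hc1
    omega
  have hedge : ∀ x y, G.Adj x y →
      trT G x = trT G y ∨ (x = u ∧ y = v) ∨ (x = v ∧ y = u) := by
    intro x y hxy
    by_cases hne : s(x, y) = s(u, v)
    · rcases Sym2.eq_iff.mp hne with ⟨rfl, rfl⟩ | ⟨rfl, rfl⟩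
      · exact Or.inr (Or.inl ⟨rfl, rfl⟩)
      · exact Or.inr (Or.inr ⟨rfl, rfl⟩)
    · exact Or.inl (hT0 x y hxy hne)
  have hcover : ∀ w, trT G w = trT G u ∨ trT G w = trT G v := by
    have step : ∀ {a b : V} (p : G.Walk a b),
        (trT G a = trT G u ∨ trT G a = trT G v) →
        (trT G b = trT G u ∨ trT G b = trT G v) := by
      intro a b p
      induction p with
      | nil => exact id
      | @cons a b c hab q ih =>
        intro ha
        apply ih
        rcases hedge a b hab with h | ⟨rfl, rfl⟩ | ⟨rfl, rfl⟩
        · rwa [← h]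
        · exact Or.inr rfl
        · exact Or.inl rfl
    intro w
    obtain ⟨p⟩ := hG.preconnected u w
    exact step p (Or.inl rfl)
  set S : V → Prop := fun w => trT G w = trT G u with hS
  have hSu : S u := rfl
  have hSv : ¬ S v := fun h => hTne h.symm
  have hcross : ∀ x y, G.Adj x y → S x → ¬ S y → x = u ∧ y = v := by
    intro x y hxy hx hy
    rcases hedge x y hxy with h | h | ⟨rfl, rfl⟩
    · exact absurd (show S y from h.symm.trans hx) hy
    · exact h
    · exact absurd hx hSv
  have hcross' : ∀ x y, G.Adj x y → ¬ S x → S y → x = v ∧ y = u := by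
    intro x y hxy hx hy
    rcases hedge x y hxy with h | ⟨rfl, rfl⟩ | h
    · exact absurd (show S x from h.trans hy) hx
    · exact absurd hy hSv
    · exact h
  have hin : ∀ w, S w → G.dist w v = G.dist w u + 1 :=
    fun w hw => crossing_dist_eq G hG huv S hSv hcross hw
  have hout : ∀ w, ¬ S w → G.dist w u = G.dist w v + 1 := by
    intro w hw
    exact crossing_dist_eq G hG huv.symm (fun a => ¬ S a) (not_not.mpr hSu)
      (fun a b hab h1 h2 => hcross' a b hab h1 (not_not.mp h2)) hw
  have nuv : nCloser G u v = (Finset.univ.filter S).card := by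
    have : ∀ w ∈ Finset.univ, (G.dist w u < G.dist w v ↔ S w) := by
      intro w _
      by_cases h : S w
      · have := hin w h; exact iff_of_true (by omega) h
      · have := hout w h; exact iff_of_false (by omega) h
    simp only [nCloser]
    rw [Finset.filter_congr this]
  have nvu : nCloser G v u = (Finset.univ.filter (fun w => ¬ S w)).card := by
    have : ∀ w ∈ Finset.univ, (G.dist w v < G.dist w u ↔ ¬ S w) := by
      intro w _
      by_cases h : S w
      · have := hin w h; exact iff_of_false (by omega) (not_not_intro h)
      · have := hout w h; exact iff_of_true (by omega) h
    simp only [nCloser]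
    rw [Finset.filter_congr this]
  have hPQ : ((Finset.univ.filter S).card : ℤ) - (Finset.univ.filter (fun w => ¬ S w)).card = 1 ∨
      ((Finset.univ.filter S).card : ℤ) - (Finset.univ.filter (fun w => ¬ S w)).card = -1 := by
    have := hc1
    simp only [contrib, nuv, nvu] at this
    rcases Int.natAbs_eq_iff.mp this with h | h
    · exact Or.inl (by push_cast at h ⊢; omega)
    · exact Or.inr (by push_cast at h ⊢; omega)
  have hzero : ∀ y, G.Adj u y → S y → nCloser G u y = nCloser G y u := by
    intro y huy hSy
    have hyv : y ≠ v := fun h => hSv (h ▸ hSy)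
    have hne : s(u, y) ≠ s(u, v) := by
      intro h
      rcases Sym2.eq_iff.mp h with ⟨-, h2⟩ | ⟨h1, -⟩
      · exact hyv h2
      · exact huv.ne h1
    have := h0 u y huy hne
    simp only [contrib, Int.natAbs_eq_zero, sub_eq_zero] at this
    exact_mod_cast this
  have hzero' : ∀ y, G.Adj v y → ¬ S y → nCloser G v y = nCloser G y v := by
    intro y hvy hSy
    have hyu : y ≠ u := fun h => hSy (h ▸ hSu)
    have hne : s(v, y) ≠ s(u, v) := by
      intro h
      rcases Sym2.eq_iff.mp h with ⟨h1, -⟩ | ⟨-, h2⟩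
      · exact huv.ne h1.symm
      · exact hyu h2
    have := h0 v y hvy hne
    simp only [contrib, Int.natAbs_eq_zero, sub_eq_zero] at this
    exact_mod_cast this
  have hfilter : Finset.univ.filter (fun w => ¬ ¬ S w) = Finset.univ.filter S :=
    Finset.filter_congr (fun w _ => not_not)
  have huP : u ∈ Finset.univ.filter S := Finset.mem_filter.mpr ⟨Finset.mem_univ u, hSu⟩
  have hvQ : v ∈ Finset.univ.filter (fun w => ¬ S w) :=
    Finset.mem_filter.mpr ⟨Finset.mem_univ v, hSv⟩
  have hPpos : 0 < (Finset.univ.filter S).card := Finset.card_pos.mpr ⟨u, huP⟩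
  have hQpos : 0 < (Finset.univ.filter (fun w => ¬ S w)).card := Finset.card_pos.mpr ⟨v, hvQ⟩
  by_cases hP2 : 2 ≤ (Finset.univ.filter S).card
  · have := count_aux G hG huv S hSu hSv hcross hcross' hzero hP2
    omega
  · have hQ2 : 2 ≤ (Finset.univ.filter (fun w => ¬ S w)).card := by omega
    have := count_aux G hG huv.symm (fun w => ¬ S w) hSv (not_not.mpr hSu)
      (fun a b hab h1 h2 => hcross' a b hab h1 (not_not.mp h2))
      (fun a b hab h1 h2 => hcross a b hab (not_not.mp h1) h2)
      hzero' hQ2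
    rw [hfilter] at this
    omega
end

section
/- Let G be a finite simple 2-edge-connected graph with Mo(G) = 3. Then there exists a positive integer k such that every vertex of G has transmission equal to k or k + 1, and both values are attained. -/
open SimpleGraph Finset

/-- The transmission of a vertex: the sum of its distances to all vertices. -/
noncomputable def transmission {V : Type*} [Fintype V] (G : SimpleGraph V) (v : V) : ℕ :=
  ∑ u : V, G.dist u v

/-!
Along an edge `uv`, every vertex is at most one step farther from one end than from the other,
so `Tr(u) - Tr(v) = n_v - n_u` and `Mo(G) = Σ_{uv ∈ E} |Tr(u) - Tr(v)|`. For any function `f`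
on the vertices and any threshold `t` strictly above `min f` and at most `max f`, the edges where
`f` crosses `t` form an edge cut separating a minimiser from a maximiser; in a bridgeless graph
such a cut has at least two edges. An edge `uv` crosses exactly `|f u - f v|` thresholds, hence
`Σ_{uv ∈ E} |f u - f v| ≥ 2 (max f - min f)`. With `Mo(G) = 3` this forces the transmissions to
take exactly two consecutive values.
-/

open scoped Classical

namespace SimpleGraph

section Threshold

variable {V : Type*} {G : SimpleGraph V} (f : V → ℤ)

def edgeGap : Sym2 V → ℕ :=
  Sym2.lift ⟨fun u v => (f u - f v).natAbs, fun u v => by dsimp only; omega⟩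

@[simp]
theorem edgeGap_mk (u v : V) : edgeGap f s(u, v) = (f u - f v).natAbs := rfl

def CrossesAt (t : ℤ) : Sym2 V → Prop :=
  Sym2.lift ⟨fun u v => min (f u) (f v) < t ∧ t ≤ max (f u) (f v),
    fun u v => by dsimp only; rw [min_comm, max_comm]⟩

@[simp]
theorem crossesAt_mk (t : ℤ) (u v : V) :
    CrossesAt f t s(u, v) ↔ min (f u) (f v) < t ∧ t ≤ max (f u) (f v) := Iff.rfl

variable {f}

theorem Walk.exists_mem_edges_crossesAt {t : ℤ} {a b : V} (p : G.Walk a b)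
    (ha : f a < t) (hb : t ≤ f b) : ∃ e ∈ p.edges, CrossesAt f t e := by
  induction p with
  | nil => omega
  | @cons x y z _ q ih =>
    by_cases hy : t ≤ f y
    · exact ⟨s(x, y), by simp, by rw [crossesAt_mk]; omega⟩
    · obtain ⟨e, he, hcross⟩ := ih (by omega) hb
      exact ⟨e, by simp [he], hcross⟩

theorem card_filter_crossesAt_le (s : Finset ℤ) (e : Sym2 V) :
    #(s.filter (CrossesAt f · e)) ≤ edgeGap f e := by
  induction e using Sym2.ind with
  | _ u v =>
  calc #(s.filter (CrossesAt f · s(u, v)))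
      ≤ #(Ioc (min (f u) (f v)) (max (f u) (f v))) := by
        refine card_le_card fun t ht => ?_
        simpa using (mem_filter.mp ht).2
    _ = edgeGap f s(u, v) := by rw [Int.card_Ioc, edgeGap_mk]; omega

end Threshold

variable {V : Type*} [Fintype V] (G : SimpleGraph V) (f : V → ℤ)

noncomputable def edgeVariation : ℕ :=
  ∑ e ∈ G.edgeFinset, edgeGap f e

noncomputable def edgeCut (t : ℤ) : Finset (Sym2 V) :=
  G.edgeFinset.filter (CrossesAt f t)

variable {G f}

theorem two_le_card_edgeCut (hG : G.Connected) (hbr : ∀ e, ¬ G.IsBridge e) {t : ℤ} {a b : V}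
    (ha : f a < t) (hb : t ≤ f b) : 2 ≤ #(G.edgeCut f t) := by
  obtain ⟨p⟩ := hG a b
  obtain ⟨e, he, hcross⟩ := p.exists_mem_edges_crossesAt ha hb
  induction e using Sym2.ind with
  | _ u v =>
  wlog huv : f u < t ∧ t ≤ f v generalizing u v
  · exact this v u (Sym2.eq_swap ▸ he) (Sym2.eq_swap ▸ hcross)
      (by rw [crossesAt_mk] at hcross; omega)
  obtain ⟨q, hq⟩ : ∃ q : G.Walk u v, s(u, v) ∉ q.edges := by
    simpa [isBridge_iff_forall_walk_mem_edges] using hbr s(u, v)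
  obtain ⟨e', he', hcross'⟩ := q.exists_mem_edges_crossesAt huv.1 huv.2
  refine one_lt_card.mpr ⟨s(u, v), ?_, e', ?_, fun h => hq (h ▸ he')⟩
  · exact mem_filter.mpr ⟨mem_edgeFinset.mpr (p.edges_subset_edgeSet he), hcross⟩
  · exact mem_filter.mpr ⟨mem_edgeFinset.mpr (q.edges_subset_edgeSet he'), hcross'⟩

theorem two_mul_sub_le_edgeVariation (hG : G.Connected) (hbr : ∀ e, ¬ G.IsBridge e) (a b : V) :
    2 * (f b - f a) ≤ G.edgeVariation f := by
  rcases le_or_gt (f b) (f a) with hba | hab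
  · omega
  calc 2 * (f b - f a) = ∑ _t ∈ Ioc (f a) (f b), (2 : ℤ) := by
        rw [sum_const, Int.card_Ioc, nsmul_eq_mul, Int.toNat_of_nonneg (by omega)]; ring
    _ ≤ ∑ t ∈ Ioc (f a) (f b), (#(G.edgeCut f t) : ℤ) := by
        refine sum_le_sum fun t ht => ?_
        exact_mod_cast two_le_card_edgeCut hG hbr (mem_Ioc.mp ht).1 (mem_Ioc.mp ht).2
    _ = ∑ e ∈ G.edgeFinset, (#((Ioc (f a) (f b)).filter (CrossesAt f · e)) : ℤ) := by
        simp only [edgeCut, card_filter]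
        push_cast
        exact sum_comm
    _ ≤ G.edgeVariation f := by
        rw [edgeVariation]
        push_cast
        exact sum_le_sum fun e _ => by exact_mod_cast card_filter_crossesAt_le _ e

end SimpleGraph

section Transmission

variable {V : Type*} [Fintype V] {G : SimpleGraph V}

theorem transmission_sub_transmission_of_adj {u v : V} (h : G.Adj u v) :
    (transmission G u : ℤ) - transmission G v = (nCloser G v u : ℤ) - nCloser G u v := by
  have hstep : ∀ w, (G.dist w u : ℤ) - G.dist w v =
      (if G.dist w v < G.dist w u then 1 else 0) - (if G.dist w u < G.dist w v then 1 else 0) := by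
    intro w
    have := h.diff_dist_adj (u := w)
    split_ifs <;> omega
  rw [transmission, transmission, nCloser, nCloser]
  push_cast
  rw [← sum_sub_distrib, sum_congr rfl fun w _ => hstep w, sum_sub_distrib, sum_boole, sum_boole]

theorem mostar_eq_edgeVariation_transmission :
    mostar G = G.edgeVariation (fun v => (transmission G v : ℤ)) := by
  refine sum_congr rfl fun e he => ?_
  induction e using Sym2.ind with
  | _ u v =>
  have := transmission_sub_transmission_of_adj (u := u) (v := v) (mem_edgeFinset.mp he)
  simp only [Sym2.lift_mk, contrib, edgeGap_mk]
  omega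

theorem transmission_pos (hG : G.Connected) {u v : V} (huv : u ≠ v) : 0 < transmission G v :=
  (hG.pos_dist_of_ne huv).trans_le
    (single_le_sum (f := (G.dist · v)) (fun _ _ => Nat.zero_le _) (mem_univ u))

end Transmission

theorem mostar_eq_three_transmissions {V : Type*} [Fintype V] (G : SimpleGraph V)
    (hG : G.Connected) (hbr : ∀ e, ¬ G.IsBridge e) (hMo : mostar G = 3) :
    ∃ k : ℕ, 0 < k ∧ (∀ v : V, transmission G v = k ∨ transmission G v = k + 1) ∧
      (∃ v : V, transmission G v = k) ∧ (∃ v : V, transmission G v = k + 1) := by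
  have := hG.nonempty
  obtain ⟨b, hb⟩ := Finite.exists_min (transmission G)
  obtain ⟨c, hc⟩ := Finite.exists_max (transmission G)
  rw [mostar_eq_edgeVariation_transmission] at hMo
  have hspread := two_mul_sub_le_edgeVariation (f := (transmission G ·)) hG hbr b c
  obtain ⟨e, -, he⟩ := exists_ne_zero_of_sum_ne_zero (hMo.trans_ne three_ne_zero)
  induction e using Sym2.ind with
  | _ u v =>
  have hcb : transmission G c = transmission G b + 1 := by
    have := hb u; have := hb v; have := hc u; have := hc v
    rw [edgeGap_mk] at he
    omega
  refine ⟨_, transmission_pos hG (u := c) (by rintro rfl; omega), fun v => ?_, ⟨b, rfl⟩, ⟨c, hcb⟩⟩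
  have := hb v; have := hc v
  omega
end

section
/- Let G be a finite simple 2-edge-connected graph and uv an edge with contribution |n_u − n_v| ≥ 2. Then Mo(G) ≥ 4. -/
open SimpleGraph Finset

/-!
Write `t(x) = Σ_w d(w, x)` for the transmission of `x`. Across an edge `ab` every distance
`d(w, a)` and `d(w, b)` differ by at most one, so `n_a - n_b = t(b) - t(a)`: the contribution
of an edge is `|t(a) - t(b)|`. If `uv` is not a bridge, a `u`–`v` path avoiding `uv` telescopes
`t(u) - t(v)` along its edges, so these edges contribute at least `|t(u) - t(v)|` in total.
Hence `Mo(G) ≥ 2 |n_u - n_v| ≥ 4`.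
-/

open scoped Classical

namespace SimpleGraph

variable {V : Type*} [Fintype V] (G : SimpleGraph V)

noncomputable def transmission (x : V) : ℤ := ∑ w, (G.dist w x : ℤ)

lemma contrib_comm (a b : V) : contrib G a b = contrib G b a := by
  simp only [contrib]; omega

noncomputable def edgeContrib : Sym2 V → ℕ := Sym2.lift ⟨contrib G, contrib_comm G⟩

lemma mostar_eq_sum_edgeContrib : mostar G = ∑ e ∈ G.edgeFinset, G.edgeContrib e := rfl

variable {G}

lemma Adj.nCloser_sub_nCloser {a b : V} (hab : G.Adj a b) :
    (nCloser G a b : ℤ) - nCloser G b a = G.transmission b - G.transmission a := by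
  simp only [nCloser, transmission, card_filter, Nat.cast_sum, ← sum_sub_distrib]
  refine sum_congr rfl fun w _ => ?_
  rcases hab.diff_dist_adj (u := w) with h | h | h <;> split_ifs <;> omega

lemma Adj.contrib_eq_natAbs_transmission_sub {a b : V} (hab : G.Adj a b) :
    contrib G a b = (G.transmission a - G.transmission b).natAbs := by
  rw [contrib, hab.nCloser_sub_nCloser, ← Int.natAbs_neg, neg_sub]

lemma Walk.natAbs_transmission_sub_le_sum_map_edgeContrib {a b : V} (p : G.Walk a b) :
    (G.transmission a - G.transmission b).natAbs ≤ (p.edges.map G.edgeContrib).sum := by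
  induction p with
  | nil => simp
  | @cons a c b hac q ih =>
    have hedge : G.edgeContrib s(a, c) = (G.transmission a - G.transmission c).natAbs :=
      hac.contrib_eq_natAbs_transmission_sub
    rw [edges_cons, List.map_cons, List.sum_cons, hedge]
    omega

lemma Walk.natAbs_transmission_sub_le_sum_edgeContrib {a b : V} (p : G.Walk a b) :
    (G.transmission a - G.transmission b).natAbs ≤ ∑ e ∈ p.edges.toFinset, G.edgeContrib e :=
  calc (G.transmission a - G.transmission b).natAbs
      ≤ (p.bypass.edges.map G.edgeContrib).sum :=
        p.bypass.natAbs_transmission_sub_le_sum_map_edgeContrib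
    _ = ∑ e ∈ p.bypass.edges.toFinset, G.edgeContrib e :=
        (List.sum_toFinset _ p.bypass_isPath.isTrail.edges_nodup).symm
    _ ≤ ∑ e ∈ p.edges.toFinset, G.edgeContrib e :=
        sum_le_sum_of_subset fun _ he =>
          List.mem_toFinset.2 (p.edges_bypass_subset_edges (List.mem_toFinset.1 he))

lemma two_mul_contrib_le_mostar {u v : V} (huv : G.Adj u v) (hbr : ¬ G.IsBridge s(u, v)) :
    2 * contrib G u v ≤ mostar G := by
  obtain ⟨p, hp⟩ : ∃ p : G.Walk u v, s(u, v) ∉ p.edges := by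
    simpa [isBridge_iff_forall_walk_mem_edges] using hbr
  have hcycle : insert s(u, v) p.edges.toFinset ⊆ G.edgeFinset :=
    insert_subset (mem_edgeFinset.2 huv) fun e he =>
      mem_edgeFinset.2 (p.edges_subset_edgeSet (List.mem_toFinset.1 he))
  have hpath : contrib G u v ≤ ∑ e ∈ p.edges.toFinset, G.edgeContrib e :=
    huv.contrib_eq_natAbs_transmission_sub ▸ p.natAbs_transmission_sub_le_sum_edgeContrib
  calc 2 * contrib G u v
      ≤ G.edgeContrib s(u, v) + ∑ e ∈ p.edges.toFinset, G.edgeContrib e := by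
        rw [two_mul]; exact add_le_add le_rfl hpath
    _ = ∑ e ∈ insert s(u, v) p.edges.toFinset, G.edgeContrib e :=
        (sum_insert (mt List.mem_toFinset.1 hp)).symm
    _ ≤ mostar G := mostar_eq_sum_edgeContrib G ▸ sum_le_sum_of_subset hcycle

end SimpleGraph

theorem mostar_ge_four_of_contrib_ge_two_general {V : Type*} [Fintype V] (G : SimpleGraph V)
    (hbr : ∀ e, ¬ G.IsBridge e) (u v : V) (huv : G.Adj u v)
    (hc : 2 ≤ contrib G u v) : 4 ≤ mostar G := by
  have := two_mul_contrib_le_mostar huv (hbr s(u, v))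
  omega

theorem mostar_ge_four_of_contrib_ge_two {V : Type*} [Fintype V] (G : SimpleGraph V)
    (hG : G.Connected) (hbr : ∀ e, ¬ G.IsBridge e) (u v : V) (huv : G.Adj u v)
    (hc : 2 ≤ contrib G u v) : 4 ≤ mostar G :=
  mostar_ge_four_of_contrib_ge_two_general G hbr u v huv hc
end
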